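/- arXiv:math/0605088 — 8 statements merged into one kernel-verified Lean document; each statement's English description precedes it below -/
import Mathlib

section
/- Let X be a metric space with an isometric action of a finite group G, let x ∈ X and R > 0. Define H to be the set of g ∈ G such that there exist g₁, …, gₙ ∈ G with g₁ = e, gₙ = g, and d(gᵢ·x, gᵢ₊₁·x) ≤ 2R for all i. Then H is a subgroup of G, and the set B = ⋃_{h ∈ H} { y : d(y, h·x) ≤ R } has diameter at most 2R·|G|. -/
/-- For an isometric action of a finite group `G` on a metric space `X`, a point `x`
and `R > 0`, the set `H` of elements reachable from the identity by chains whose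
consecutive steps move `x` by at most `2R` is a subgroup of `G`, and the union
`B = ⋃_{h ∈ H} closedBall (h • x) R` has diameter at most `2R·|G|`. -/
theorem chain_subgroup_and_diam_bound
    {X : Type*} [MetricSpace X] {G : Type*} [Group G] [Finite G]
    [MulAction G X] (hiso : ∀ g : G, Isometry (fun x : X => g • x))
    (x : X) (R : ℝ) (hR : 0 < R)
    (Hset : Set G)
    (hH : Hset = {g : G | ∃ (n : ℕ) (c : Fin (n + 1) → G), c 0 = 1 ∧ c (Fin.last n) = g ∧
      ∀ i : Fin n, dist ((c i.castSucc) • x) ((c i.succ) • x) ≤ 2 * R}) :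
    (∃ H : Subgroup G, (H : Set G) = Hset) ∧
    Metric.diam (⋃ h ∈ Hset, Metric.closedBall (h • x) R) ≤ 2 * R * Nat.card G := by
  have hdist : ∀ (g : G) (y z : X), dist (g • y) (g • z) = dist y z :=
    fun g y z => (hiso g).dist_eq y z
  -- ℕ-indexed characterization of Hset
  have hmem : ∀ g : G, g ∈ Hset ↔ ∃ (n : ℕ) (f : ℕ → G), f 0 = 1 ∧ f n = g ∧
      ∀ i < n, dist (f i • x) (f (i+1) • x) ≤ 2 * R := by
    intro g
    rw [hH]
    constructor
    · rintro ⟨n, c, h0, hn, hstep⟩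
      refine ⟨n, fun k => c ⟨min k n, by omega⟩, ?_, ?_, ?_⟩
      · simpa using h0
      · simpa [Fin.last] using hn
      · intro i hi
        have h1 : min i n = i := Nat.min_eq_left hi.le
        have h2 : min (i+1) n = i+1 := Nat.min_eq_left hi
        have := hstep ⟨i, hi⟩
        simp only [Fin.castSucc_mk, Fin.succ_mk] at this
        simpa [h1, h2] using this
    · rintro ⟨n, f, h0, hn, hstep⟩
      refine ⟨n, fun i => f i, by simpa using h0, by simpa [Fin.last] using hn, ?_⟩
      intro i
      simpa using hstep i i.isLt
  -- one
  have h_one : (1 : G) ∈ Hset := by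
    refine (hmem 1).mpr ⟨0, fun _ => 1, rfl, rfl, ?_⟩
    intro i hi; exact absurd hi (Nat.not_lt_zero i)
  -- mul
  have h_mul : ∀ a b : G, a ∈ Hset → b ∈ Hset → a * b ∈ Hset := by
    intro a b ha hb
    obtain ⟨n, f, hf0, hfn, hfs⟩ := (hmem a).mp ha
    obtain ⟨m, f2, hf20, hf2m, hf2s⟩ := (hmem b).mp hb
    refine (hmem (a*b)).mpr ⟨n + m, fun k => if k ≤ n then f k else a * f2 (k - n), ?_, ?_, ?_⟩
    · simpa using hf0
    · by_cases hm0 : m = 0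
      · subst hm0
        simp only [Nat.add_zero, le_refl, if_pos]
        rw [hfn, ← hf2m, hf20, mul_one]
      · have : ¬ (n + m ≤ n) := by omega
        simp only [this, if_neg, if_false]
        rw [Nat.add_sub_cancel_left, hf2m]
    · intro k hk
      rcases lt_trichotomy k n with hkn | hkn | hkn
      · have e1 : k ≤ n := hkn.le
        have e2 : k + 1 ≤ n := hkn
        simp only [e1, e2, if_pos]
        exact hfs k hkn
      · subst hkn
        have e1 : k ≤ k := le_refl k
        have e2 : ¬ (k + 1 ≤ k) := by omega
        simp only [e1, if_pos, e2, if_neg, if_false]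
        have hrw : f k = a * f2 0 := by rw [hf20, mul_one, hfn]
        rw [hrw, Nat.add_sub_cancel_left, mul_smul, mul_smul, hdist]
        exact hf2s 0 (by omega)
      · have e1 : ¬ (k ≤ n) := by omega
        have e2 : ¬ (k + 1 ≤ n) := by omega
        simp only [e1, e2, if_neg, if_false]
        have hrw : k + 1 - n = (k - n) + 1 := by omega
        rw [hrw, mul_smul, mul_smul, hdist]
        exact hf2s (k - n) (by omega)
  -- inv
  have h_inv : ∀ a : G, a ∈ Hset → a⁻¹ ∈ Hset := by
    intro a ha
    obtain ⟨n, f, hf0, hfn, hfs⟩ := (hmem a).mp ha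
    refine (hmem a⁻¹).mpr ⟨n, fun k => a⁻¹ * f (n - k), ?_, ?_, ?_⟩
    · simp [hfn]
    · simp [hf0]
    · intro k hk
      rw [mul_smul, mul_smul, hdist, dist_comm]
      have h1 : n - (k+1) + 1 = n - k := by omega
      have := hfs (n - (k+1)) (by omega)
      rwa [h1] at this
  -- key distance bound
  have key : ∀ n : ℕ, ∀ g : G, ∀ f : ℕ → G, f 0 = 1 → f n = g →
      (∀ i < n, dist (f i • x) (f (i+1) • x) ≤ 2 * R) →
      dist x (g • x) ≤ 2 * R * ((Nat.card G - 1 : ℕ) : ℝ) := by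
    intro n
    induction n using Nat.strong_induction_on with
    | _ n IH =>
      intro g f h0 hn hstep
      by_cases hcard : n + 1 ≤ Nat.card G
      · have hle : (n : ℝ) ≤ ((Nat.card G - 1 : ℕ) : ℝ) := by
          exact_mod_cast Nat.le_sub_one_of_lt hcard
        calc dist x (g • x) = dist (f 0 • x) (f n • x) := by rw [h0, hn, one_smul]
          _ ≤ ∑ i ∈ Finset.range n, dist (f i • x) (f (i+1) • x) :=
              dist_le_range_sum_dist (fun i => f i • x) n
          _ ≤ ∑ _i ∈ Finset.range n, (2*R) :=
              Finset.sum_le_sum (fun i hi => hstep i (Finset.mem_range.mp hi))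
          _ = (n : ℝ) * (2*R) := by simp [mul_comm]
          _ ≤ ((Nat.card G - 1 : ℕ) : ℝ) * (2*R) :=
              mul_le_mul_of_nonneg_right hle (by linarith)
          _ = 2 * R * ((Nat.card G - 1 : ℕ) : ℝ) := by ring
      · push_neg at hcard
        haveI := Fintype.ofFinite G
        have hlt : Fintype.card G < Fintype.card (Fin (n+1)) := by
          simpa [Nat.card_eq_fintype_card] using hcard
        obtain ⟨a, b, hab, heq⟩ :=
          Fintype.exists_ne_map_eq_of_card_lt (fun i : Fin (n+1) => f i) hlt
        obtain ⟨i, j, hij, hjn, hfij⟩ : ∃ i j : ℕ, i < j ∧ j ≤ n ∧ f i = f j := by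
          rcases lt_or_gt_of_ne (fun h => hab (Fin.ext h)) with h | h
          · exact ⟨a, b, h, Nat.lt_succ_iff.mp b.isLt, heq⟩
          · exact ⟨b, a, h, Nat.lt_succ_iff.mp a.isLt, heq.symm⟩
        set m := n - (j - i) with hm
        refine IH m (by omega) g (fun k => if k ≤ i then f k else f (k + (j - i))) ?_ ?_ ?_
        · simpa using h0
        · by_cases hmi : m ≤ i
          · have h1 : m = i := by omega
            have h2 : j = n := by omega
            simp only [hmi, if_pos]
            rw [h1, hfij, h2, hn]
          · simp only [hmi, if_neg, if_false]
            have : m + (j - i) = n := by omega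
            rw [this, hn]
        · intro k hk
          rcases lt_trichotomy k i with hki | hki | hki
          · have e1 : k ≤ i := hki.le
            have e2 : k + 1 ≤ i := hki
            simp only [e1, e2, if_pos]
            exact hstep k (by omega)
          · subst hki
            have e1 : k ≤ k := le_refl k
            have e2 : ¬ (k + 1 ≤ k) := by omega
            simp only [e1, if_pos, e2, if_neg, if_false]
            have h1 : k + 1 + (j - k) = j + 1 := by omega
            rw [hfij, h1]
            exact hstep j (by omega)
          · have e1 : ¬ (k ≤ i) := by omega
            have e2 : ¬ (k + 1 ≤ i) := by omega
            simp only [e1, e2, if_neg, if_false]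
            have h1 : k + 1 + (j - i) = (k + (j - i)) + 1 := by omega
            rw [h1]
            exact hstep (k + (j - i)) (by omega)
  constructor
  · exact ⟨{ carrier := Hset, one_mem' := h_one,
             mul_mem' := fun ha hb => h_mul _ _ ha hb,
             inv_mem' := fun ha => h_inv _ ha }, rfl⟩
  · have hcard1 : 1 ≤ Nat.card G := Nat.one_le_iff_ne_zero.mpr Nat.card_pos.ne'
    apply Metric.diam_le_of_forall_dist_le (by positivity)
    intro y hy z hz
    simp only [Set.mem_iUnion] at hy hz
    obtain ⟨h, hhH, hy⟩ := hy
    obtain ⟨h', hh'H, hz⟩ := hz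
    have h1 : dist y (h • x) ≤ R := Metric.mem_closedBall.mp hy
    have h2 : dist z (h' • x) ≤ R := Metric.mem_closedBall.mp hz
    have hmem' : h⁻¹ * h' ∈ Hset := h_mul _ _ (h_inv _ hhH) hh'H
    obtain ⟨n, f, hf0, hfn, hfs⟩ := (hmem _).mp hmem'
    have hkey := key n _ f hf0 hfn hfs
    have e1 : dist (h • x) (h' • x) = dist x ((h⁻¹ * h') • x) := by
      rw [← hdist h⁻¹ (h • x) (h' • x), ← mul_smul, ← mul_smul, inv_mul_cancel, one_smul]
    have hcast : ((Nat.card G - 1 : ℕ) : ℝ) = (Nat.card G : ℝ) - 1 := by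
      rw [Nat.cast_sub hcard1, Nat.cast_one]
    rw [hcast] at hkey
    have tri : dist y z ≤ dist y (h • x) + dist (h • x) (h' • x) + dist (h' • x) z :=
      dist_triangle4 y (h • x) (h' • x) z
    have h3 : dist (h' • x) z ≤ R := by rw [dist_comm]; exact h2
    rw [e1] at tri
    nlinarith [hkey, tri]
end

section
/- Let Δ be the standard k-simplex in ℝ^{k+1} (convex hull of the standard basis vectors) with the Euclidean metric, let ρ be a face of Δ, and let p_ρ : Δ → ρ be the simplicial projection which is the identity on the vertices of ρ and sends all other vertices to a fixed vertex v₀ of ρ. Then for all z, z' ∈ Δ, ‖p_ρ(z) − p_ρ(z')‖ ≤ √(k+1) · ‖z − z'‖. -/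
/-!
In coordinates `p_ρ` is the linear map that moves the mass of each coordinate `j` to the
coordinate `f j`, where `f` is the vertex map (`e_j ↦ e_{f j}`). Each new coordinate is a sum over
a fibre of `f`, so by Cauchy–Schwarz its square is at most `(k + 1)` times the sum of the squares
over that fibre; the fibres partition the coordinates, whence `‖p_ρ w‖² ≤ (k + 1) ‖w‖²`.
-/

open Finset

section FiberSum

variable {ι κ : Type*} [Fintype ι] [Fintype κ] [DecidableEq κ]

theorem sum_sq_sum_fiber_le (f : ι → κ) (g : ι → ℝ) :
    ∑ i, (∑ j with f j = i, g j) ^ 2 ≤ Fintype.card ι * ∑ j, g j ^ 2 := by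
  calc ∑ i, (∑ j with f j = i, g j) ^ 2
      ≤ ∑ i, (#{j | f j = i} : ℝ) * ∑ j with f j = i, g j ^ 2 :=
        sum_le_sum fun i _ => sq_sum_le_card_mul_sum_sq
    _ ≤ ∑ i, (Fintype.card ι : ℝ) * ∑ j with f j = i, g j ^ 2 := by
        refine sum_le_sum fun i _ => mul_le_mul_of_nonneg_right ?_ ?_
        · exact_mod_cast card_le_univ _
        · exact sum_nonneg fun j _ => sq_nonneg _
    _ = Fintype.card ι * ∑ j, g j ^ 2 := by
        rw [← mul_sum, sum_fiberwise]

noncomputable def fiberSum (f : ι → κ) (x : EuclideanSpace ℝ ι) : EuclideanSpace ℝ κ :=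
  WithLp.toLp 2 fun i => ∑ j with f j = i, x j

theorem dist_fiberSum_le (f : ι → κ) (x y : EuclideanSpace ℝ ι) :
    dist (fiberSum f x) (fiberSum f y) ≤ √(Fintype.card ι) * dist x y := by
  simp only [EuclideanSpace.dist_eq, fiberSum, Real.dist_eq, sq_abs, ← sum_sub_distrib]
  rw [← Real.sqrt_mul (Nat.cast_nonneg _)]
  exact Real.sqrt_le_sqrt (sum_sq_sum_fiber_le f fun j => x j - y j)

end FiberSum

theorem filter_ite_mem_eq {α : Type*} [Fintype α] [DecidableEq α] (s : Finset α) (v₀ i : α) :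
    univ.filter (fun j => (if j ∈ s then j else v₀) = i) =
      if i = v₀ then insert v₀ sᶜ else if i ∈ s then {i} else ∅ := by
  ext j
  by_cases hj : j ∈ s <;> split_ifs <;> simp <;> grind

theorem simplicial_projection_lipschitz_general
    (k : ℕ) (s : Finset (Fin (k + 1))) (v₀ : Fin (k + 1)) (hv₀ : v₀ ∈ s)
    (p : EuclideanSpace ℝ (Fin (k + 1)) → EuclideanSpace ℝ (Fin (k + 1)))
    (hp : ∀ z i, p z i =
      if i = v₀ then z v₀ + ∑ j ∈ sᶜ, z j else if i ∈ s then z i else 0)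
    (z z' : EuclideanSpace ℝ (Fin (k + 1))) :
    dist (p z) (p z') ≤ Real.sqrt (k + 1) * dist z z' := by
  have hp_eq : ∀ x, p x = fiberSum (fun j => if j ∈ s then j else v₀) x := by
    intro x
    ext i
    simp only [hp, fiberSum, filter_ite_mem_eq s v₀]
    split_ifs <;> simp [sum_insert, hv₀]
  simpa [hp_eq] using dist_fiberSum_le (fun j => if j ∈ s then j else v₀) z z'

/-- The simplicial projection of the standard `k`-simplex onto a face `ρ` (spanned by
the vertex set `s`, with base vertex `v₀ ∈ s`) is `√(k+1)`-Lipschitz for the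
Euclidean metric. -/
theorem simplicial_projection_lipschitz
    (k : ℕ) (s : Finset (Fin (k + 1))) (v₀ : Fin (k + 1)) (hv₀ : v₀ ∈ s)
    (p : EuclideanSpace ℝ (Fin (k + 1)) → EuclideanSpace ℝ (Fin (k + 1)))
    (hp : ∀ z i, p z i =
      if i = v₀ then z v₀ + ∑ j ∈ sᶜ, z j else if i ∈ s then z i else 0)
    (z z' : EuclideanSpace ℝ (Fin (k + 1)))
    (hz : (∀ i, 0 ≤ z i) ∧ ∑ i, z i = 1)
    (hz' : (∀ i, 0 ≤ z' i) ∧ ∑ i, z' i = 1) :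
    dist (p z) (p z') ≤ Real.sqrt (k + 1) * dist z z' :=
  simplicial_projection_lipschitz_general k s v₀ hv₀ p hp z z'
end

section
/- Let σ and τ be faces of the standard k-simplex Δ with σ ∩ τ ≠ ∅. Let d_pl denote the Euclidean path length metric on the subcomplex σ ∪ τ (the infimum of Euclidean lengths of paths in σ ∪ τ), and let d_Δ be the Euclidean metric on Δ. Then for all x ∈ σ and y ∈ τ, d_pl(x, y) ≤ 3·√(k+1) · d_Δ(x, y). -/
/-!
Pick a vertex `m` common to `σ` and `τ`. Moving the mass `a` that `x` puts outside `τ` onto `m`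
gives a point `x'` of `σ ∩ τ` with `‖x - x'‖ ≤ √2 a`; symmetrically `y' ∈ σ ∩ τ` with
`‖y - y'‖ ≤ √2 b`. The polygon `x → x' → y' → y` runs through `σ`, `σ`, `τ`, and by the triangle
inequality its length is at most `2 (‖x - x'‖ + ‖y - y'‖) + ‖x - y‖`. Each coordinate other than `m`
contributes at most `|xᵢ - yᵢ|` to `a + b`, so Cauchy–Schwarz gives `a + b ≤ √k ‖x - y‖`, and
finally `2√2 √k + 1 ≤ 3 √(k + 1)`.
-/

open scoped ENNReal
open Set

section PathConcat

variable {E : Type*} {γ₁ γ₂ : ℝ → E}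

noncomputable def pathConcat (γ₁ γ₂ : ℝ → E) (u : ℝ) : E :=
  if u ≤ 1 / 2 then γ₁ (2 * u) else γ₂ (2 * u - 1)

theorem pathConcat_eqOn_left : EqOn (pathConcat γ₁ γ₂) (fun u => γ₁ (2 * u + 0)) (Iic (1 / 2)) :=
  fun u (hu : u ≤ 1 / 2) => by simp only [pathConcat, if_pos hu, add_zero]

theorem pathConcat_eqOn_right (h : γ₁ 1 = γ₂ 0) :
    EqOn (pathConcat γ₁ γ₂) (fun u => γ₂ (2 * u + -1)) (Ici (1 / 2)) := by
  intro u (hu : 1 / 2 ≤ u)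
  rcases hu.eq_or_lt with rfl | hu
  · norm_num [pathConcat, h]
  · simp only [pathConcat, if_neg hu.not_ge, sub_eq_add_neg]

end PathConcat

section PathDist

variable {E : Type*} [PseudoEMetricSpace E]

noncomputable def pathDist (S : Set E) (x y : E) : ℝ≥0∞ :=
  sInf {L : ℝ≥0∞ | ∃ γ : ℝ → E, ContinuousOn γ (Icc 0 1) ∧ γ 0 = x ∧ γ 1 = y ∧
    (∀ u ∈ Icc (0 : ℝ) 1, γ u ∈ S) ∧ L = eVariationOn γ (Icc 0 1)}

theorem pathDist_le_eVariationOn {S : Set E} {x y : E} {γ : ℝ → E}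
    (hγ : ContinuousOn γ (Icc 0 1)) (h0 : γ 0 = x) (h1 : γ 1 = y)
    (hS : ∀ u ∈ Icc (0 : ℝ) 1, γ u ∈ S) :
    pathDist S x y ≤ eVariationOn γ (Icc 0 1) :=
  sInf_le ⟨γ, hγ, h0, h1, hS, rfl⟩

theorem eVariationOn_comp_affine (γ : ℝ → E) {a : ℝ} (ha : 0 < a) (b c d : ℝ) :
    eVariationOn (fun u => γ (a * u + b)) (Icc c d) =
      eVariationOn γ (Icc (a * c + b) (a * d + b)) := by
  rw [← image_affine_Icc' ha]
  have hmono : Monotone fun u => a * u + b := fun u v huv => by dsimp only; gcongr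
  exact eVariationOn.comp_eq_of_monotoneOn γ _ (hmono.monotoneOn _)

variable {γ₁ γ₂ : ℝ → E}

theorem continuousOn_pathConcat (h₁ : ContinuousOn γ₁ (Icc 0 1)) (h₂ : ContinuousOn γ₂ (Icc 0 1))
    (h : γ₁ 1 = γ₂ 0) : ContinuousOn (pathConcat γ₁ γ₂) (Icc 0 1) := by
  rw [← Icc_union_Icc_eq_Icc (by norm_num : (0 : ℝ) ≤ 1 / 2) (by norm_num : (1 / 2 : ℝ) ≤ 1)]
  refine ContinuousOn.union_of_isClosed ?_ ?_ isClosed_Icc isClosed_Icc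
  · refine ((h₁.comp (by fun_prop) fun u hu => ?_).congr
      (pathConcat_eqOn_left.mono Icc_subset_Iic_self))
    constructor <;> linarith [hu.1, hu.2]
  · refine ((h₂.comp (by fun_prop) fun u hu => ?_).congr
      ((pathConcat_eqOn_right h).mono Icc_subset_Ici_self))
    constructor <;> linarith [hu.1, hu.2]

theorem eVariationOn_pathConcat (h : γ₁ 1 = γ₂ 0) :
    eVariationOn (pathConcat γ₁ γ₂) (Icc 0 1) =
      eVariationOn γ₁ (Icc 0 1) + eVariationOn γ₂ (Icc 0 1) := by
  have hsplit := eVariationOn.Icc_add_Icc (pathConcat γ₁ γ₂) (s := univ)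
    (by norm_num : (0 : ℝ) ≤ 1 / 2) (by norm_num : (1 / 2 : ℝ) ≤ 1) (mem_univ _)
  rw [univ_inter, univ_inter, univ_inter] at hsplit
  rw [← hsplit, eVariationOn.eq_of_eqOn (pathConcat_eqOn_left.mono Icc_subset_Iic_self),
    eVariationOn.eq_of_eqOn ((pathConcat_eqOn_right h).mono Icc_subset_Ici_self),
    eVariationOn_comp_affine _ two_pos, eVariationOn_comp_affine _ two_pos]
  norm_num

theorem pathDist_triangle (S : Set E) (x y z : E) :
    pathDist S x z ≤ pathDist S x y + pathDist S y z := by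
  show _ ≤ sInf _ + sInf _
  rw [sInf_eq_iInf', sInf_eq_iInf']
  refine ENNReal.le_iInf_add_iInf ?_
  rintro ⟨_, γ₁, c₁, rfl, y₁, S₁, rfl⟩ ⟨_, γ₂, c₂, y₂, rfl, S₂, rfl⟩
  have hy : γ₁ 1 = γ₂ 0 := y₁.trans y₂.symm
  rw [← eVariationOn_pathConcat hy]
  refine pathDist_le_eVariationOn (continuousOn_pathConcat c₁ c₂ hy) ?_ ?_ fun u hu => ?_
  · simp [pathConcat]
  · norm_num [pathConcat]
  · by_cases hu' : u ≤ 1 / 2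
    · rw [pathConcat_eqOn_left hu']
      exact S₁ _ ⟨by linarith [hu.1], by linarith⟩
    · rw [pathConcat_eqOn_right hy (le_of_not_ge hu')]
      exact S₂ _ ⟨by linarith, by linarith [hu.2]⟩

end PathDist

theorem pathDist_le_edist_of_segment_subset {E : Type*} [NormedAddCommGroup E] [NormedSpace ℝ E]
    {S : Set E} {x y : E} (h : segment ℝ x y ⊆ S) : pathDist S x y ≤ edist x y := by
  have hLip : LipschitzWith (nndist x y) (AffineMap.lineMap x y : ℝ → E) :=
    LipschitzWith.of_dist_le_mul fun u v => by
      rw [dist_lineMap_lineMap, mul_comm, coe_nndist]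
  calc pathDist S x y ≤ eVariationOn (AffineMap.lineMap x y ∘ id) (Icc (0 : ℝ) 1) :=
        pathDist_le_eVariationOn (AffineMap.lineMap_continuous.continuousOn)
          (AffineMap.lineMap_apply_zero x y) (AffineMap.lineMap_apply_one x y)
          fun u hu => h (segment_eq_image_lineMap ℝ x y ▸ mem_image_of_mem _ hu)
    _ ≤ nndist x y * eVariationOn id (Icc (0 : ℝ) 1) :=
        (hLip.lipschitzOnWith (s := univ)).comp_eVariationOn_le (mapsTo_univ _ _)
    _ = edist x y := by simp

section StdFace

variable {ι : Type*} [Fintype ι]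

def stdFace (s : Finset ι) : Set (EuclideanSpace ℝ ι) :=
  {z | (∀ i, 0 ≤ z i) ∧ ∑ i, z i = 1 ∧ ∀ i ∉ s, z i = 0}

theorem convex_stdFace (s : Finset ι) : Convex ℝ (stdFace s) := by
  rintro x ⟨hx₀, hx₁, hxs⟩ y ⟨hy₀, hy₁, hys⟩ a b ha hb hab
  refine ⟨fun i => ?_, ?_, fun i hi => ?_⟩
  · simp only [PiLp.add_apply, PiLp.smul_apply, smul_eq_mul]
    have := hx₀ i; have := hy₀ i; positivity
  · simp only [PiLp.add_apply, PiLp.smul_apply, smul_eq_mul, Finset.sum_add_distrib,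
      ← Finset.mul_sum, hx₁, hy₁, mul_one, hab]
  · simp [hxs i hi, hys i hi]

variable [DecidableEq ι]

def pushMass (m : ι) (t : Finset ι) (x : EuclideanSpace ℝ ι) : EuclideanSpace ℝ ι :=
  WithLp.toLp 2 fun i => (if i ∈ t then x i else 0) + if i = m then ∑ j ∈ tᶜ, x j else 0

variable {m : ι} {s t : Finset ι} {x y : EuclideanSpace ℝ ι}

theorem pushMass_mem_stdFace_inter (hx : x ∈ stdFace s) (hms : m ∈ s) (hmt : m ∈ t) :
    pushMass m t x ∈ stdFace s ∩ stdFace t := by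
  obtain ⟨hx₀, hx₁, hxs⟩ := hx
  have hout : ∀ i ∉ t, pushMass m t x i = 0 := fun i hi => by
    simp [pushMass, hi, show i ≠ m by rintro rfl; exact hi hmt]
  have h₀ : ∀ i, 0 ≤ pushMass m t x i := fun i => by
    simp only [pushMass, PiLp.toLp_apply]
    have := Finset.sum_nonneg fun j (_ : j ∈ tᶜ) => hx₀ j
    have := hx₀ i
    split_ifs <;> positivity
  have h₁ : ∑ i, pushMass m t x i = 1 := by
    simp only [pushMass, PiLp.toLp_apply, Finset.sum_add_distrib, Finset.sum_ite_eq',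
      Finset.mem_univ, if_true, Finset.sum_ite_mem, Finset.univ_inter, Finset.sum_add_sum_compl,
      hx₁]
  refine ⟨⟨h₀, h₁, fun i hi => ?_⟩, h₀, h₁, hout⟩
  simp [pushMass, hxs i hi, show i ≠ m by rintro rfl; exact hi hms]

theorem dist_pushMass_le (hx₀ : ∀ i, 0 ≤ x i) (hmt : m ∈ t) :
    dist x (pushMass m t x) ≤ √2 * ∑ j ∈ tᶜ, x j := by
  set a := ∑ j ∈ tᶜ, x j
  have ha : 0 ≤ a := Finset.sum_nonneg fun j _ => hx₀ j
  have hcoord : ∀ i, (x i - pushMass m t x i) ^ 2 =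
      (if i ∈ tᶜ then x i ^ 2 else 0) + if i = m then a ^ 2 else 0 := fun i => by
    by_cases him : i = m
    · subst him; simp [pushMass, hmt, a]
    · by_cases hit : i ∈ t <;> simp [pushMass, him, hit]
  have hsq : dist x (pushMass m t x) ^ 2 ≤ (√2 * a) ^ 2 := by
    calc dist x (pushMass m t x) ^ 2 = ∑ j ∈ tᶜ, x j ^ 2 + a ^ 2 := by
          rw [EuclideanSpace.dist_eq, Real.sq_sqrt (by positivity)]
          simp only [Real.dist_eq, sq_abs, hcoord, Finset.sum_add_distrib, Finset.sum_ite_mem,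
            Finset.univ_inter, Finset.sum_ite_eq', Finset.mem_univ, if_true]
      _ ≤ a ^ 2 + a ^ 2 := by gcongr; exact Finset.sum_sq_le_sq_sum_of_nonneg fun j _ => hx₀ j
      _ = (√2 * a) ^ 2 := by rw [mul_pow, Real.sq_sqrt zero_le_two]; ring
  exact (pow_le_pow_iff_left₀ dist_nonneg (by positivity) two_ne_zero).1 hsq

theorem sum_compl_add_sum_compl_le (hxs : ∀ i ∉ s, x i = 0) (hyt : ∀ i ∉ t, y i = 0)
    (hms : m ∈ s) (hmt : m ∈ t) :
    ∑ j ∈ tᶜ, x j + ∑ j ∈ sᶜ, y j ≤ √(Fintype.card ι - 1) * dist x y := by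
  set f : ι → ℝ := fun j => (if j ∈ tᶜ then x j else 0) + if j ∈ sᶜ then y j else 0
  have hsum : ∑ j ∈ tᶜ, x j + ∑ j ∈ sᶜ, y j = ∑ j ∈ Finset.univ.erase m, f j := by
    rw [Finset.sum_erase _ (by simp [f, hms, hmt])]
    simp only [f, Finset.sum_add_distrib, Finset.sum_ite_mem, Finset.univ_inter]
  have hf : ∀ j, f j ≤ 1 * |x j - y j| := fun j => by
    by_cases hjs : j ∈ s <;> by_cases hjt : j ∈ t
    · simp [f, hjs, hjt]
    · simp [f, hjs, hjt, hyt j hjt, le_abs_self]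
    · simp [f, hjs, hjt, hxs j hjs, le_abs_self]
    · simp [f, hjs, hjt, hxs j hjs, hyt j hjt]
  calc ∑ j ∈ tᶜ, x j + ∑ j ∈ sᶜ, y j
      ≤ ∑ j ∈ Finset.univ.erase m, 1 * |x j - y j| := hsum ▸ Finset.sum_le_sum fun j _ => hf j
    _ ≤ √(∑ j ∈ Finset.univ.erase m, 1 ^ 2) * √(∑ j ∈ Finset.univ.erase m, |x j - y j| ^ 2) :=
        Real.sum_mul_le_sqrt_mul_sqrt _ _ _
    _ ≤ √(Fintype.card ι - 1) * dist x y := by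
        rw [EuclideanSpace.dist_eq]
        gcongr
        · simp [Finset.card_erase_of_mem, Nat.cast_sub (Fintype.card_pos_iff.2 ⟨m⟩)]
        · exact Finset.sum_le_sum_of_subset_of_nonneg (Finset.subset_univ _)
            fun j _ _ => by positivity

theorem dist_add_dist_pushMass_add_dist_le (hx : x ∈ stdFace s) (hy : y ∈ stdFace t)
    (hms : m ∈ s) (hmt : m ∈ t) :
    dist x (pushMass m t x) + dist (pushMass m t x) (pushMass m s y) + dist (pushMass m s y) y ≤
      (2 * √2 * √(Fintype.card ι - 1) + 1) * dist x y := by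
  have hx' := dist_pushMass_le hx.1 hmt
  have hy' := dist_pushMass_le hy.1 hms
  have hmass := mul_le_mul_of_nonneg_left (sum_compl_add_sum_compl_le hx.2.2 hy.2.2 hms hmt)
    (by positivity : (0 : ℝ) ≤ 2 * √2)
  have := dist_triangle4 (pushMass m t x) x y (pushMass m s y)
  rw [dist_comm (pushMass m s y)]
  rw [dist_comm (pushMass m t x) x] at this
  linarith

theorem pathDist_stdFace_union_le (hx : x ∈ stdFace s) (hy : y ∈ stdFace t)
    (hms : m ∈ s) (hmt : m ∈ t) :
    pathDist (stdFace s ∪ stdFace t) x y ≤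
      ENNReal.ofReal ((2 * √2 * √(Fintype.card ι - 1) + 1) * dist x y) := by
  obtain ⟨hx's, -⟩ := pushMass_mem_stdFace_inter hx hms hmt
  obtain ⟨hy't, hy's⟩ := pushMass_mem_stdFace_inter hy hmt hms
  set x' := pushMass m t x
  set y' := pushMass m s y
  calc pathDist (stdFace s ∪ stdFace t) x y
      ≤ pathDist (stdFace s ∪ stdFace t) x x' + pathDist (stdFace s ∪ stdFace t) x' y' +
          pathDist (stdFace s ∪ stdFace t) y' y :=
        (pathDist_triangle _ x y' y).trans (add_le_add (pathDist_triangle _ x x' y') le_rfl)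
    _ ≤ edist x x' + edist x' y' + edist y' y := by
        gcongr <;> refine pathDist_le_edist_of_segment_subset ?_
        · exact ((convex_stdFace s).segment_subset hx hx's).trans subset_union_left
        · exact ((convex_stdFace s).segment_subset hx's hy's).trans subset_union_left
        · exact ((convex_stdFace t).segment_subset hy't hy).trans subset_union_right
    _ = ENNReal.ofReal (dist x x' + dist x' y' + dist y' y) := by
        simp only [edist_dist, ENNReal.ofReal_add, dist_nonneg, add_nonneg]
    _ ≤ _ := ENNReal.ofReal_le_ofReal (dist_add_dist_pushMass_add_dist_le hx hy hms hmt)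

end StdFace

theorem two_mul_sqrt_two_mul_sqrt_add_one_le {r : ℝ} (hr : 0 ≤ r) :
    2 * √2 * √r + 1 ≤ 3 * √(r + 1) := by
  have h2 := Real.sq_sqrt (zero_le_two : (0 : ℝ) ≤ 2)
  have hr' := Real.sq_sqrt hr
  have hr1 := Real.sq_sqrt (by linarith : 0 ≤ r + 1)
  -- `(2√2√r + 1)² ≤ 9(r + 1)` is `(√r - 2√2)² ≥ 0`
  refine le_of_sq_le_sq ?_ (by positivity)
  nlinarith [sq_nonneg (√r - 2 * √2)]

theorem path_length_metric_on_two_faces_general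
    (k : ℕ) (s t : Finset (Fin (k + 1)))
    (hst : (s ∩ t).Nonempty)
    (σ τ : Set (EuclideanSpace ℝ (Fin (k + 1))))
    (hσ : σ = {z | (∀ i, 0 ≤ z i) ∧ ∑ i, z i = 1 ∧ ∀ i ∉ s, z i = 0})
    (hτ : τ = {z | (∀ i, 0 ≤ z i) ∧ ∑ i, z i = 1 ∧ ∀ i ∉ t, z i = 0})
    (dpl : EuclideanSpace ℝ (Fin (k + 1)) → EuclideanSpace ℝ (Fin (k + 1)) → ℝ≥0∞)
    (hdpl : dpl = fun x y => sInf {L : ℝ≥0∞ | ∃ γ : ℝ → EuclideanSpace ℝ (Fin (k + 1)),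
      ContinuousOn γ (Set.Icc 0 1) ∧ γ 0 = x ∧ γ 1 = y ∧
      (∀ u ∈ Set.Icc (0 : ℝ) 1, γ u ∈ σ ∪ τ) ∧ L = eVariationOn γ (Set.Icc 0 1)})
    (x y : EuclideanSpace ℝ (Fin (k + 1))) (hx : x ∈ σ) (hy : y ∈ τ) :
    dpl x y ≤ ENNReal.ofReal (3 * Real.sqrt (k + 1) * dist x y) := by
  subst hσ hτ hdpl
  obtain ⟨m, hm⟩ := hst
  obtain ⟨hms, hmt⟩ := Finset.mem_inter.1 hm
  have hcard : (Fintype.card (Fin (k + 1)) : ℝ) - 1 = k := by simp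
  calc pathDist (stdFace s ∪ stdFace t) x y
      ≤ ENNReal.ofReal ((2 * √2 * √(Fintype.card (Fin (k + 1)) - 1) + 1) * dist x y) :=
        pathDist_stdFace_union_le hx hy hms hmt
    _ ≤ ENNReal.ofReal (3 * √(k + 1) * dist x y) := by
        rw [hcard]
        gcongr
        exact two_mul_sqrt_two_mul_sqrt_add_one_le k.cast_nonneg

/-- For intersecting faces `σ`, `τ` of the standard `k`-simplex, the Euclidean path
length metric on the subcomplex `σ ∪ τ` is bounded by `3√(k+1)` times the Euclidean
metric: `d_pl(x,y) ≤ 3√(k+1)·d_Δ(x,y)` for `x ∈ σ`, `y ∈ τ`. -/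
theorem path_length_metric_on_two_faces
    (k : ℕ) (s t : Finset (Fin (k + 1))) (hs : s.Nonempty) (ht : t.Nonempty)
    (hst : (s ∩ t).Nonempty)
    (σ τ : Set (EuclideanSpace ℝ (Fin (k + 1))))
    (hσ : σ = {z | (∀ i, 0 ≤ z i) ∧ ∑ i, z i = 1 ∧ ∀ i ∉ s, z i = 0})
    (hτ : τ = {z | (∀ i, 0 ≤ z i) ∧ ∑ i, z i = 1 ∧ ∀ i ∉ t, z i = 0})
    (dpl : EuclideanSpace ℝ (Fin (k + 1)) → EuclideanSpace ℝ (Fin (k + 1)) → ℝ≥0∞)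
    (hdpl : dpl = fun x y => sInf {L : ℝ≥0∞ | ∃ γ : ℝ → EuclideanSpace ℝ (Fin (k + 1)),
      ContinuousOn γ (Set.Icc 0 1) ∧ γ 0 = x ∧ γ 1 = y ∧
      (∀ u ∈ Set.Icc (0 : ℝ) 1, γ u ∈ σ ∪ τ) ∧ L = eVariationOn γ (Set.Icc 0 1)})
    (x y : EuclideanSpace ℝ (Fin (k + 1))) (hx : x ∈ σ) (hy : y ∈ τ) :
    dpl x y ≤ ENNReal.ofReal (3 * Real.sqrt (k + 1) * dist x y) :=
  path_length_metric_on_two_faces_general k s t hst σ τ hσ hτ dpl hdpl x y hx hy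
end

section
/- Let U be an open cover of a metric space X of dimension at most n (each point of X lies in at most n+1 members of U). For x ∈ X and U ∈ U set x_U = d(x, X \ U). Then for all x, y ∈ X: (a) at most 2(n+1) members U ∈ U satisfy x_U ≠ 0 or y_U ≠ 0; (b) |Σ_U x_U − Σ_U y_U| ≤ 2(n+1)·d(x,y); and (c) the ℓ²-distance satisfies (Σ_U (x_U − y_U)²)^{1/2} ≤ √(2(n+1)) · d(x,y). -/
/-- For an open cover `𝒰` of dimension at most `n` (each point in at most `n+1`
members), with `x_U = d(x, X\U)`:
(a) at most `2(n+1)` members have `x_U ≠ 0` or `y_U ≠ 0`;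
(b) `|Σ_U x_U − Σ_U y_U| ≤ 2(n+1)·d(x,y)`;
(c) `(Σ_U (x_U − y_U)²)^{1/2} ≤ √(2(n+1))·d(x,y)`. -/
theorem partition_data_estimates
    {X : Type*} [MetricSpace X] (n : ℕ) (𝒰 : Set (Set X))
    (hopen : ∀ U ∈ 𝒰, IsOpen U)
    (hcover : ⋃₀ 𝒰 = Set.univ)
    (hmult : ∀ x : X, {U | U ∈ 𝒰 ∧ x ∈ U}.encard ≤ (n : ℕ∞) + 1)
    (x y : X) :
    {U | U ∈ 𝒰 ∧ (Metric.infDist x Uᶜ ≠ 0 ∨ Metric.infDist y Uᶜ ≠ 0)}.encard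
        ≤ 2 * ((n : ℕ∞) + 1) ∧
    |(∑ᶠ U ∈ 𝒰, Metric.infDist x Uᶜ) - ∑ᶠ U ∈ 𝒰, Metric.infDist y Uᶜ|
        ≤ 2 * (n + 1) * dist x y ∧
    Real.sqrt (∑ᶠ U ∈ 𝒰, (Metric.infDist x Uᶜ - Metric.infDist y Uᶜ) ^ 2)
        ≤ Real.sqrt (2 * (n + 1)) * dist x y := by
  set A : Set (Set X) := {U | U ∈ 𝒰 ∧ x ∈ U} with hA
  set B : Set (Set X) := {U | U ∈ 𝒰 ∧ y ∈ U} with hB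
  -- if infDist z Uᶜ ≠ 0 then z ∈ U
  have key : ∀ (z : X) (U : Set X), Metric.infDist z Uᶜ ≠ 0 → z ∈ U := by
    intro z U h
    by_contra hz
    exact h (Metric.infDist_zero_of_mem hz)
  have hSsub : {U | U ∈ 𝒰 ∧ (Metric.infDist x Uᶜ ≠ 0 ∨ Metric.infDist y Uᶜ ≠ 0)}
      ⊆ A ∪ B := by
    rintro U ⟨hU, h | h⟩
    · exact Or.inl ⟨hU, key x U h⟩
    · exact Or.inr ⟨hU, key y U h⟩
  have hcardAB : (A ∪ B).encard ≤ 2 * ((n : ℕ∞) + 1) := by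
    calc (A ∪ B).encard ≤ A.encard + B.encard := Set.encard_union_le A B
      _ ≤ ((n : ℕ∞) + 1) + ((n : ℕ∞) + 1) := add_le_add (hmult x) (hmult y)
      _ = 2 * ((n : ℕ∞) + 1) := (two_mul _).symm
  refine ⟨le_trans (Set.encard_mono hSsub) hcardAB, ?_⟩
  have hAfin : A.Finite := Set.finite_of_encard_le_coe
    (le_trans (hmult x) (by norm_cast))
  have hBfin : B.Finite := Set.finite_of_encard_le_coe
    (le_trans (hmult y) (by norm_cast))
  have hABfin : (A ∪ B).Finite := hAfin.union hBfin
  set T := hABfin.toFinset with hT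
  have hTcard : (T.card : ℝ) ≤ 2 * (n + 1) := by
    have h1 : ((T.card : ℕ∞)) ≤ ((2 * (n + 1) : ℕ) : ℕ∞) := by
      rw [← hABfin.encard_eq_coe_toFinset_card] at *
      calc (A ∪ B).encard ≤ 2 * ((n : ℕ∞) + 1) := hcardAB
        _ = ((2 * (n + 1) : ℕ) : ℕ∞) := by push_cast; ring
    have h2 : T.card ≤ 2 * (n + 1) := by exact_mod_cast h1
    calc (T.card : ℝ) ≤ ((2 * (n + 1) : ℕ) : ℝ) := by exact_mod_cast h2
      _ = 2 * (n + 1) := by push_cast; ring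
  -- rewrite finsums as finset sums over T
  have hsum : ∀ z : X, z ∈ ({x, y} : Set X) →
      (∑ᶠ U ∈ 𝒰, Metric.infDist z Uᶜ) = ∑ U ∈ T, Metric.infDist z Uᶜ := by
    intro z hz
    apply finsum_mem_eq_sum_of_inter_support_eq
    ext U
    simp only [hT, Set.Finite.coe_toFinset, Set.mem_inter_iff,
      Function.mem_support]
    constructor
    · rintro ⟨hU, hne⟩
      refine ⟨?_, hne⟩
      rcases hz with rfl | rfl
      · exact Or.inl ⟨hU, key z U hne⟩
      · exact Or.inr ⟨hU, key z U hne⟩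
    · rintro ⟨hU, hne⟩
      exact ⟨(hU.elim And.left And.left : U ∈ 𝒰), hne⟩
  have hsq : (∑ᶠ U ∈ 𝒰, (Metric.infDist x Uᶜ - Metric.infDist y Uᶜ) ^ 2)
      = ∑ U ∈ T, (Metric.infDist x Uᶜ - Metric.infDist y Uᶜ) ^ 2 := by
    apply finsum_mem_eq_sum_of_inter_support_eq
    ext U
    simp only [hT, Set.Finite.coe_toFinset, Set.mem_inter_iff,
      Function.mem_support]
    constructor
    · rintro ⟨hU, hne⟩
      refine ⟨?_, hne⟩
      have : Metric.infDist x Uᶜ ≠ 0 ∨ Metric.infDist y Uᶜ ≠ 0 := by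
        by_contra h
        push_neg at h
        simp [h.1, h.2] at hne
      rcases this with h | h
      · exact Or.inl ⟨hU, key x U h⟩
      · exact Or.inr ⟨hU, key y U h⟩
    · rintro ⟨hU, hne⟩
      exact ⟨(hU.elim And.left And.left : U ∈ 𝒰), hne⟩
  have hlip : ∀ U : Set X,
      |Metric.infDist x Uᶜ - Metric.infDist y Uᶜ| ≤ dist x y := by
    intro U
    have := (Metric.lipschitz_infDist_pt (Uᶜ)).dist_le_mul x y
    rwa [Real.dist_eq, NNReal.coe_one, one_mul] at this
  constructor
  · rw [hsum x (by simp), hsum y (by simp), ← Finset.sum_sub_distrib]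
    calc |∑ U ∈ T, (Metric.infDist x Uᶜ - Metric.infDist y Uᶜ)|
        ≤ ∑ U ∈ T, |Metric.infDist x Uᶜ - Metric.infDist y Uᶜ| :=
          Finset.abs_sum_le_sum_abs _ _
      _ ≤ ∑ _U ∈ T, dist x y := Finset.sum_le_sum fun U _ => hlip U
      _ = T.card * dist x y := by rw [Finset.sum_const, nsmul_eq_mul]
      _ ≤ 2 * (n + 1) * dist x y :=
          mul_le_mul_of_nonneg_right hTcard dist_nonneg
  · rw [hsq]
    have hle : (∑ U ∈ T, (Metric.infDist x Uᶜ - Metric.infDist y Uᶜ) ^ 2)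
        ≤ 2 * (n + 1) * dist x y ^ 2 := by
      calc (∑ U ∈ T, (Metric.infDist x Uᶜ - Metric.infDist y Uᶜ) ^ 2)
          ≤ ∑ _U ∈ T, dist x y ^ 2 := by
            refine Finset.sum_le_sum fun U _ => ?_
            have := hlip U
            calc (Metric.infDist x Uᶜ - Metric.infDist y Uᶜ) ^ 2
                = |Metric.infDist x Uᶜ - Metric.infDist y Uᶜ| ^ 2 := (sq_abs _).symm
              _ ≤ dist x y ^ 2 := pow_le_pow_left₀ (abs_nonneg _) this 2
        _ = T.card * dist x y ^ 2 := by rw [Finset.sum_const, nsmul_eq_mul]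
        _ ≤ 2 * (n + 1) * dist x y ^ 2 :=
            mul_le_mul_of_nonneg_right hTcard (sq_nonneg _)
    calc Real.sqrt (∑ U ∈ T, (Metric.infDist x Uᶜ - Metric.infDist y Uᶜ) ^ 2)
        ≤ Real.sqrt (2 * (n + 1) * dist x y ^ 2) := Real.sqrt_le_sqrt hle
      _ = Real.sqrt (2 * (n + 1)) * dist x y := by
          rw [Real.sqrt_mul (by positivity), Real.sqrt_sq dist_nonneg]
end

section
/- Let U be an open cover of a metric space X of dimension at most n and Lebesgue number at least R > 0 (in the sense that for every x the closed R-ball about x is contained in some member). Define f : X → ℓ¹(U) by f(x) = (d(x, X\U))_{U∈U} and g(x) = f(x)/‖f(x)‖₁. Then g is well-defined and for all x, y ∈ X, ‖g(x) − g(y)‖₂ ≤ 4(n+1)·d(x,y)/R. -/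
/-- For an open cover `𝒰` of dimension at most `n` and Lebesgue number at least
`R > 0` with no member equal to all of `X`, the normalized distance-to-complement
map `g(x) = f(x)/‖f(x)‖₁` (with `f(x)_U = d(x, X\U)`) is well defined and satisfies
`‖g(x) − g(y)‖₂ ≤ 4(n+1)·d(x,y)/R`. -/
theorem normalized_partition_map_estimate
    {X : Type*} [MetricSpace X] (n : ℕ) (R : ℝ) (hR : 0 < R) (𝒰 : Set (Set X))
    (hopen : ∀ U ∈ 𝒰, IsOpen U)
    (hcover : ⋃₀ 𝒰 = Set.univ)
    (hmult : ∀ x : X, {U | U ∈ 𝒰 ∧ x ∈ U}.encard ≤ (n : ℕ∞) + 1)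
    (hne : ∀ U ∈ 𝒰, U ≠ Set.univ)
    (hleb : ∀ x : X, ∃ U ∈ 𝒰, Metric.closedBall x R ⊆ U)
    (g : X → Set X → ℝ)
    (hg : ∀ x U, g x U = Metric.infDist x Uᶜ / ∑ᶠ V ∈ 𝒰, Metric.infDist x Vᶜ) :
    (∀ x : X, 0 < ∑ᶠ V ∈ 𝒰, Metric.infDist x Vᶜ) ∧
    ∀ x y : X,
      Real.sqrt (∑ᶠ U ∈ 𝒰, (g x U - g y U) ^ 2) ≤ 4 * (n + 1) * dist x y / R := by
  classical
  have hzero : ∀ (x : X) (U : Set X), x ∉ U → Metric.infDist x Uᶜ = 0 := fun x U hx =>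
    Metric.infDist_zero_of_mem (by simpa using hx)
  have hfnonneg : ∀ (x : X) (U : Set X), 0 ≤ Metric.infDist x Uᶜ :=
    fun x U => Metric.infDist_nonneg
  set S : X → Set (Set X) := fun x => {U | U ∈ 𝒰 ∧ x ∈ U} with hS
  have hSfin : ∀ x, (S x).Finite := by
    intro x
    refine Set.finite_of_encard_le_coe (k := n + 1) ?_
    have := hmult x
    push_cast
    exact this
  have hScard : ∀ x, (hSfin x).toFinset.card ≤ n + 1 := by
    intro x
    have h3 : ((hSfin x).toFinset.card : ℕ∞) ≤ ((n + 1 : ℕ) : ℕ∞) := by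
      rw [← (hSfin x).encard_eq_coe_toFinset_card]
      push_cast
      exact hmult x
    exact_mod_cast h3
  have hsum_eq : ∀ (x : X) (t : Finset (Set X)), ↑t ⊆ 𝒰 → S x ⊆ ↑t →
      ∑ᶠ V ∈ 𝒰, Metric.infDist x Vᶜ = ∑ V ∈ t, Metric.infDist x Vᶜ := by
    intro x t ht hst
    apply finsum_mem_eq_sum_of_inter_support_eq
    ext U
    simp only [Set.mem_inter_iff, Function.mem_support, Finset.coe_sort_coe]
    constructor
    · rintro ⟨hU, hne0⟩
      have hxU : x ∈ U := by
        by_contra hx; exact hne0 (hzero x U hx)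
      exact ⟨hst ⟨hU, hxU⟩, hne0⟩
    · rintro ⟨hU, hne0⟩
      exact ⟨ht hU, hne0⟩
  have hRsum : ∀ x : X, R ≤ ∑ᶠ V ∈ 𝒰, Metric.infDist x Vᶜ := by
    intro x
    obtain ⟨U, hU, hball⟩ := hleb x
    have hxU : x ∈ U := hball (Metric.mem_closedBall_self hR.le)
    have hUS : U ∈ S x := ⟨hU, hxU⟩
    have hRle : R ≤ Metric.infDist x Uᶜ := by
      by_contra h
      push_neg at h
      have hne' : Uᶜ.Nonempty := Set.nonempty_compl.2 (hne U hU)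
      obtain ⟨z, hz, hzd⟩ := (Metric.infDist_lt_iff hne').1 h
      exact hz (hball (Metric.mem_closedBall.2 (by rw [dist_comm]; exact hzd.le)))
    rw [hsum_eq x (hSfin x).toFinset (by simp [Set.Finite.coe_toFinset]; exact fun U h => h.1)
      (by simp [Set.Finite.coe_toFinset])]
    refine hRle.trans (Finset.single_le_sum (fun V _ => hfnonneg x V) ?_)
    simpa using hUS
  have hpos : ∀ x : X, 0 < ∑ᶠ V ∈ 𝒰, Metric.infDist x Vᶜ :=
    fun x => hR.trans_le (hRsum x)
  refine ⟨hpos, ?_⟩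
  intro x y
  set sx := ∑ᶠ V ∈ 𝒰, Metric.infDist x Vᶜ with hsx
  set sy := ∑ᶠ V ∈ 𝒰, Metric.infDist y Vᶜ with hsy
  have hsxpos : 0 < sx := hpos x
  have hsypos : 0 < sy := hpos y
  have hsxR : R ≤ sx := hRsum x
  have hsyR : R ≤ sy := hRsum y
  set d := dist x y with hd
  have hdnn : 0 ≤ d := dist_nonneg
  set T : Finset (Set X) := (hSfin x).toFinset ∪ (hSfin y).toFinset with hT
  have hT𝒰 : ↑T ⊆ 𝒰 := by
    intro U hU
    simp only [hT, Finset.coe_union, Set.mem_union, Set.Finite.coe_toFinset] at hU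
    rcases hU with h | h <;> exact h.1
  have hTx : S x ⊆ ↑T := by
    intro U hU
    simp only [hT, Finset.coe_union, Set.mem_union, Set.Finite.coe_toFinset]
    exact Or.inl hU
  have hTy : S y ⊆ ↑T := by
    intro U hU
    simp only [hT, Finset.coe_union, Set.mem_union, Set.Finite.coe_toFinset]
    exact Or.inr hU
  have hTcard : (T.card : ℝ) ≤ 2 * (n + 1) := by
    have := (Finset.card_union_le (hSfin x).toFinset (hSfin y).toFinset).trans
      (add_le_add (hScard x) (hScard y))
    calc (T.card : ℝ) ≤ ((n + 1) + (n + 1) : ℕ) := by exact_mod_cast this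
      _ = 2 * (n + 1) := by push_cast; ring
  have hlip : ∀ U : Set X, |Metric.infDist x Uᶜ - Metric.infDist y Uᶜ| ≤ d := by
    intro U
    have := (Metric.lipschitz_infDist_pt (Uᶜ)).dist_le_mul x y
    rw [Real.dist_eq] at this
    simpa using this
  -- sum difference bound
  have hsumx : sx = ∑ V ∈ T, Metric.infDist x Vᶜ := hsum_eq x T hT𝒰 hTx
  have hsumy : sy = ∑ V ∈ T, Metric.infDist y Vᶜ := hsum_eq y T hT𝒰 hTy
  have hsdiff : |sx - sy| ≤ 2 * (n + 1) * d := by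
    rw [hsumx, hsumy, ← Finset.sum_sub_distrib]
    calc |∑ V ∈ T, (Metric.infDist x Vᶜ - Metric.infDist y Vᶜ)| ≤ ∑ V ∈ T, |Metric.infDist x Vᶜ - Metric.infDist y Vᶜ| :=
          Finset.abs_sum_le_sum_abs _ _
      _ ≤ ∑ _V ∈ T, d := Finset.sum_le_sum fun V _ => hlip V
      _ = T.card * d := by rw [Finset.sum_const, nsmul_eq_mul]
      _ ≤ 2 * (n + 1) * d := mul_le_mul_of_nonneg_right hTcard hdnn
  have hgynn : ∀ U, 0 ≤ g y U := by
    intro U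
    rw [hg]
    exact div_nonneg (hfnonneg y U) hsypos.le
  have hgy_sum : ∑ U ∈ T, g y U = 1 := by
    have : ∑ U ∈ T, g y U = (∑ U ∈ T, Metric.infDist y Uᶜ) / sy := by
      rw [Finset.sum_div]
      exact Finset.sum_congr rfl fun U _ => hg y U
    rw [this, ← hsumy, div_self hsypos.ne']
  -- coordinatewise bound
  have hcoord : ∀ U, |g x U - g y U| ≤ d / R + g y U * (2 * (n + 1) * d / R) := by
    intro U
    have hgx : g x U = Metric.infDist x Uᶜ / sx := hg x U
    have hgy : g y U = Metric.infDist y Uᶜ / sy := hg y U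
    have key : g x U - g y U = (Metric.infDist x Uᶜ - Metric.infDist y Uᶜ) / sx + (Metric.infDist y Uᶜ / sy) * ((sy - sx) / sx) := by
      rw [hgx, hgy]
      field_simp
      ring
    rw [key]
    calc |(Metric.infDist x Uᶜ - Metric.infDist y Uᶜ) / sx + (Metric.infDist y Uᶜ / sy) * ((sy - sx) / sx)|
        ≤ |(Metric.infDist x Uᶜ - Metric.infDist y Uᶜ) / sx| + |(Metric.infDist y Uᶜ / sy) * ((sy - sx) / sx)| := abs_add_le _ _
      _ = |Metric.infDist x Uᶜ - Metric.infDist y Uᶜ| / sx + (Metric.infDist y Uᶜ / sy) * (|sy - sx| / sx) := by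
          rw [abs_div, abs_mul, abs_div, abs_div, abs_of_pos hsxpos, abs_of_pos hsypos,
            abs_of_nonneg (hfnonneg y U)]
      _ ≤ d / R + (Metric.infDist y Uᶜ / sy) * (2 * (n + 1) * d / R) := by
          have e1 : |Metric.infDist x Uᶜ - Metric.infDist y Uᶜ| / sx ≤ d / R :=
            div_le_div₀ hdnn (hlip U) hR hsxR
          have e2 : |sy - sx| / sx ≤ 2 * (n + 1) * d / R :=
            div_le_div₀ (by positivity) (by rw [abs_sub_comm]; exact hsdiff) hR hsxR
          exact add_le_add e1
            (mul_le_mul_of_nonneg_left e2 (div_nonneg (hfnonneg y U) hsypos.le))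
      _ = d / R + g y U * (2 * (n + 1) * d / R) := by rw [hgy]
  -- l1 bound
  have hl1 : ∑ U ∈ T, |g x U - g y U| ≤ 4 * (n + 1) * d / R := by
    calc ∑ U ∈ T, |g x U - g y U|
        ≤ ∑ U ∈ T, (d / R + g y U * (2 * (n + 1) * d / R)) :=
          Finset.sum_le_sum fun U _ => hcoord U
      _ = T.card * (d / R) + (∑ U ∈ T, g y U) * (2 * (n + 1) * d / R) := by
          rw [Finset.sum_add_distrib, Finset.sum_const, nsmul_eq_mul, ← Finset.sum_mul]
      _ = T.card * (d / R) + 2 * (n + 1) * d / R := by rw [hgy_sum, one_mul]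
      _ ≤ 2 * (n + 1) * (d / R) + 2 * (n + 1) * d / R :=
          add_le_add (mul_le_mul_of_nonneg_right hTcard (div_nonneg hdnn hR.le)) le_rfl
      _ = 4 * (n + 1) * d / R := by ring
  -- finsum of squares equals finset sum
  have hsq_eq : ∑ᶠ U ∈ 𝒰, (g x U - g y U) ^ 2 = ∑ U ∈ T, (g x U - g y U) ^ 2 := by
    apply finsum_mem_eq_sum_of_inter_support_eq
    ext U
    simp only [Set.mem_inter_iff, Function.mem_support, Finset.coe_sort_coe]
    constructor
    · rintro ⟨hU, hne0⟩
      refine ⟨?_, hne0⟩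
      by_contra hUT
      have hxU : x ∉ U := fun h => hUT (hTx ⟨hU, h⟩)
      have hyU : y ∉ U := fun h => hUT (hTy ⟨hU, h⟩)
      apply hne0
      rw [hg, hg, hzero x U hxU, hzero y U hyU]
      simp
    · rintro ⟨hU, hne0⟩
      exact ⟨hT𝒰 hU, hne0⟩
  -- l2 <= l1
  have hB : 0 ≤ ∑ U ∈ T, |g x U - g y U| :=
    Finset.sum_nonneg fun U _ => abs_nonneg _
  have hsq_le : ∑ U ∈ T, (g x U - g y U) ^ 2 ≤ (∑ U ∈ T, |g x U - g y U|) ^ 2 := by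
    calc ∑ U ∈ T, (g x U - g y U) ^ 2
        = ∑ U ∈ T, |g x U - g y U| * |g x U - g y U| := by
          refine Finset.sum_congr rfl fun U _ => ?_
          rw [← abs_mul, sq, abs_mul_self]
      _ ≤ ∑ U ∈ T, |g x U - g y U| * (∑ V ∈ T, |g x V - g y V|) := by
          refine Finset.sum_le_sum fun U hU => ?_
          exact mul_le_mul_of_nonneg_left
            (Finset.single_le_sum (f := fun V => |g x V - g y V|)
              (fun V _ => abs_nonneg _) hU) (abs_nonneg _)
      _ = (∑ U ∈ T, |g x U - g y U|) ^ 2 := by rw [← Finset.sum_mul, sq]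
  calc Real.sqrt (∑ᶠ U ∈ 𝒰, (g x U - g y U) ^ 2)
      ≤ Real.sqrt ((∑ U ∈ T, |g x U - g y U|) ^ 2) := by
        rw [hsq_eq]; exact Real.sqrt_le_sqrt hsq_le
    _ = ∑ U ∈ T, |g x U - g y U| := Real.sqrt_sq hB
    _ ≤ 4 * (n + 1) * d / R := hl1
end

section
/- Let X be a proper metric space, X₀ ⊆ X a closed subset, and R > 0 such that every point of X is within distance R of X₀ (i.e., X = X₀^R). Then a closed subset B ⊆ X is compact if and only if B^R ∩ X₀ is finite whenever X₀ is discrete (every point of X₀ is isolated in X₀), where B^R = { x : dist(x, B) ≤ R }. In particular, if f : X → Y is a metrically coarse map into a proper metric space Y whose restriction to X₀ is proper, and X₀ is closed and discrete with X = X₀^R, then f is proper. -/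
lemma finite_of_compact_of_isolated' {X : Type*} [MetricSpace X] {S : Set X}
    (hS : IsCompact S)
    (h : ∀ x ∈ S, ∃ ε > (0 : ℝ), ∀ y ∈ S, dist x y < ε → y = x) : S.Finite := by
  classical
  choose! ε hε hsep using h
  have hcover : S ⊆ ⋃ x ∈ S, Metric.ball x (ε x) := by
    intro x hx
    exact Set.mem_biUnion hx (Metric.mem_ball_self (hε x hx))
  obtain ⟨t, htS, htfin, hcov⟩ := hS.elim_finite_subcover_image
    (fun x _ => Metric.isOpen_ball) hcover
  refine htfin.subset ?_
  intro y hy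
  obtain ⟨x, hxt, hxy⟩ := Set.mem_iUnion₂.1 (hcov hy)
  have : y = x := hsep x (htS hxt) y hy (by rw [dist_comm]; exact Metric.mem_ball.1 hxy)
  rwa [this]

/-- Let `X` be a proper metric space, `X₀ ⊆ X` closed and discrete with `X = X₀^R`.
Then a closed set `B ⊆ X` is compact iff `B^R ∩ X₀` is finite. Consequently, a
continuous metrically coarse map `f : X → Y` into a proper metric space whose
restriction to `X₀` is proper is itself proper. -/
theorem compactness_criterion_and_properness
    {X Y : Type*} [MetricSpace X] [ProperSpace X] [MetricSpace Y] [ProperSpace Y]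
    (X₀ : Set X) (hX₀closed : IsClosed X₀)
    (hdisc : ∀ x ∈ X₀, ∃ ε > (0 : ℝ), ∀ y ∈ X₀, dist x y < ε → y = x)
    (R : ℝ) (hR : 0 < R)
    (hnet : ∀ x : X, ∃ x₀ ∈ X₀, dist x x₀ ≤ R) :
    (∀ B : Set X, IsClosed B →
      (IsCompact B ↔ ({x : X | ∃ b ∈ B, dist x b ≤ R} ∩ X₀).Finite)) ∧
    (∀ f : X → Y, Continuous f →
      (∀ R' > (0 : ℝ), ∃ S > (0 : ℝ), ∀ x x' : X, dist x x' < R' → dist (f x) (f x') < S) →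
      (∀ K : Set Y, IsCompact K → IsCompact ((X₀.restrict f) ⁻¹' K)) →
      ∀ K : Set Y, IsCompact K → IsCompact (f ⁻¹' K)) := by
  have part1 : ∀ B : Set X, IsClosed B →
      (IsCompact B ↔ ({x : X | ∃ b ∈ B, dist x b ≤ R} ∩ X₀).Finite) := by
    intro B hBclosed
    constructor
    · intro hB
      have hsub : {x : X | ∃ b ∈ B, dist x b ≤ R} ⊆ Metric.cthickening R B := by
        rintro x ⟨b, hb, hbd⟩
        exact Metric.mem_cthickening_of_dist_le x b R B hb hbd
      have hKc : IsCompact (Metric.cthickening R B ∩ X₀) :=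
        (hB.cthickening).inter_right hX₀closed
      have hfin : (Metric.cthickening R B ∩ X₀).Finite :=
        finite_of_compact_of_isolated' hKc (fun x hx =>
          (hdisc x hx.2).imp fun ε h => ⟨h.1, fun y hy => h.2 y hy.2⟩)
      exact hfin.subset (Set.inter_subset_inter_left _ hsub)
    · intro hfin
      have hbdd : Bornology.IsBounded B := by
        have hBsub : B ⊆ ⋃ x ∈ ({x : X | ∃ b ∈ B, dist x b ≤ R} ∩ X₀),
            Metric.closedBall x R := by
          intro b hb
          obtain ⟨x₀, hx₀, hd⟩ := hnet b
          refine Set.mem_biUnion ⟨⟨b, hb, by rwa [dist_comm]⟩, hx₀⟩ ?_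
          simpa [Metric.mem_closedBall, dist_comm] using hd
        exact ((Bornology.isBounded_biUnion hfin).2
          (fun x _ => Metric.isBounded_closedBall)).subset hBsub
      exact Metric.isCompact_of_isClosed_isBounded hBclosed hbdd
  refine ⟨part1, ?_⟩
  intro f hf hcoarse hproper K hK
  obtain ⟨S, hS, hSc⟩ := hcoarse (R + 1) (by linarith)
  have hK' : IsCompact (Metric.cthickening S K) := hK.cthickening
  have hC : IsCompact (X₀ ∩ f ⁻¹' (Metric.cthickening S K)) := by
    have := (hproper _ hK').image continuous_subtype_val
    have heq : Subtype.val '' (X₀.restrict f ⁻¹' Metric.cthickening S K)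
        = X₀ ∩ f ⁻¹' (Metric.cthickening S K) := by
      ext x
      constructor
      · rintro ⟨⟨y, hy⟩, hmem, rfl⟩
        exact ⟨hy, hmem⟩
      · rintro ⟨hx, hmem⟩
        exact ⟨⟨x, hx⟩, hmem, rfl⟩
    rwa [heq] at this
  have hCfin : (X₀ ∩ f ⁻¹' (Metric.cthickening S K)).Finite :=
    finite_of_compact_of_isolated' hC (fun x hx =>
      (hdisc x hx.1).imp fun ε h => ⟨h.1, fun y hy => h.2 y hy.1⟩)
  refine (part1 (f ⁻¹' K) (hK.isClosed.preimage hf)).2 ?_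
  refine hCfin.subset ?_
  rintro x ⟨⟨b, hb, hbd⟩, hx₀⟩
  refine ⟨hx₀, ?_⟩
  have hdfx : dist (f x) (f b) < S := hSc x b (by linarith)
  exact Metric.mem_cthickening_of_dist_le (f x) (f b) S K hb hdfx.le
end

section
/- Let X be a metric space with an isometric action of a group Γ that is uniformly Fin-contractible, let G ≤ Γ be a finite subgroup, and let S be a collection of subgroups of G closed under conjugation by elements of G. Then the quotient X^S / G, with the quotient metric, is uniformly contractible, where X^S = ⋃_{H ∈ S} X^H is the union of the fixed sets of members of S. -/
/-- If `X` is uniformly `Fin`-contractible for an isometric action of `Γ`, `G ≤ Γ` is a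
finite subgroup and `𝒮` is a collection of subgroups of `G` closed under conjugation
by elements of `G`, then the quotient `X^𝒮 / G` (with the quotient metric `D`) is
uniformly contractible. -/
theorem quotient_of_fixed_sets_uniformly_contractible
    {X : Type*} [MetricSpace X] {Γ : Type*} [Group Γ] [MulAction Γ X]
    (hiso : ∀ γ : Γ, Isometry (fun x : X => γ • x))
    -- `X` is uniformly `Fin`-contractible:
    (hufc : ∀ G : Subgroup Γ, Finite G → ∀ R > (0 : ℝ), ∃ S > (0 : ℝ),
      ∀ B : Set X, B.Nonempty → (∀ g ∈ G, (fun x : X => g • x) '' B = B) →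
        Bornology.IsBounded B → Metric.diam B < R →
        ∃ H : X → ℝ → X,
          ContinuousOn (fun q : X × ℝ => H q.1 q.2) (B ×ˢ Set.Icc (0 : ℝ) 1) ∧
          (∀ b ∈ B, H b 0 = b) ∧
          (∃ z : X, ∀ b ∈ B, H b 1 = z) ∧
          (∀ b ∈ B, ∀ t ∈ Set.Icc (0 : ℝ) 1, H b t ∈ {x : X | ∃ b' ∈ B, dist x b' ≤ S}) ∧
          (∀ g ∈ G, ∀ b ∈ B, ∀ t ∈ Set.Icc (0 : ℝ) 1, H (g • b) t = g • H b t))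
    (G : Subgroup Γ) (hGfin : Finite G)
    (𝒮 : Set (Subgroup Γ))
    (h𝒮sub : ∀ H ∈ 𝒮, H ≤ G)
    (h𝒮conj : ∀ H ∈ 𝒮, ∀ g ∈ G,
      Subgroup.map (MulAut.conj g).toMonoidHom H ∈ 𝒮)
    -- the union of fixed sets of members of `𝒮`:
    (Xs : Set X) (hXs : Xs = {x : X | ∃ H ∈ 𝒮, ∀ h ∈ H, h • x = x})
    -- the quotient `X^𝒮 / G` and its quotient metric `D`:
    (D : Quot (fun a b : Xs => ∃ g ∈ G, g • (a : X) = (b : X)) →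
         Quot (fun a b : Xs => ∃ g ∈ G, g • (a : X) = (b : X)) → ℝ)
    (hD : D = fun u v => sInf {r : ℝ | ∃ a b : Xs,
      Quot.mk _ a = u ∧ Quot.mk _ b = v ∧ r = dist (a : X) (b : X)}) :
    -- conclusion: the quotient is uniformly contractible
    ∀ R > (0 : ℝ), ∃ T > (0 : ℝ),
      ∀ B : Set (Quot (fun a b : Xs => ∃ g ∈ G, g • (a : X) = (b : X))),
        B.Nonempty → (∀ u ∈ B, ∀ v ∈ B, D u v < R) →
        ∃ F : Quot (fun a b : Xs => ∃ g ∈ G, g • (a : X) = (b : X)) → ℝ →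
              Quot (fun a b : Xs => ∃ g ∈ G, g • (a : X) = (b : X)),
          ContinuousOn (fun q => F q.1 q.2) (B ×ˢ Set.Icc (0 : ℝ) 1) ∧
          (∀ u ∈ B, F u 0 = u) ∧
          (∃ z, ∀ u ∈ B, F u 1 = z) ∧
          (∀ u ∈ B, ∀ t ∈ Set.Icc (0 : ℝ) 1, F u t ∈ {w | ∃ v ∈ B, D w v ≤ T}) := by
  classical
  intro R hR
  let Rq : Xs → Xs → Prop := fun a b => ∃ g ∈ G, g • (a : X) = (b : X)
  have hdist : ∀ (γ : Γ) (a b : X), dist (γ • a) (γ • b) = dist a b :=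
    fun γ a b => (hiso γ).dist_eq a b
  -- `Xs` is invariant under `G`
  have hXsinv : ∀ γ ∈ G, ∀ z ∈ Xs, γ • z ∈ Xs := by
    intro γ hγ z hz
    rw [hXs] at hz ⊢
    obtain ⟨H₀, hH₀, hfix⟩ := hz
    refine ⟨Subgroup.map (MulAut.conj γ).toMonoidHom H₀, h𝒮conj H₀ hH₀ γ hγ, ?_⟩
    intro h hh
    rw [Subgroup.mem_map] at hh
    obtain ⟨h₀, hh₀, rfl⟩ := hh
    show ((MulAut.conj γ).toMonoidHom h₀) • (γ • z) = γ • z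
    have h1 : ((MulAut.conj γ).toMonoidHom h₀) = γ * h₀ * γ⁻¹ := rfl
    have h2 : (γ * h₀ * γ⁻¹) * γ = γ * h₀ := by group
    rw [h1, smul_smul, h2, mul_smul, hfix h₀ hh₀]
  -- characterization of equality of classes
  have hclass : ∀ a b : Xs, Quot.mk Rq a = Quot.mk Rq b ↔ ∃ γ ∈ G, γ • (a : X) = (b : X) := by
    intro a b
    constructor
    · intro h
      have h' := Quot.eq.mp h
      clear h
      induction h' with
      | rel a b hab => exact hab
      | refl a => exact ⟨1, G.one_mem, one_smul _ _⟩
      | symm a b _ ih =>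
        obtain ⟨γ, hγ, hs⟩ := ih
        exact ⟨γ⁻¹, G.inv_mem hγ, by rw [← hs, inv_smul_smul]⟩
      | trans a b c _ _ ih1 ih2 =>
        obtain ⟨γ1, hγ1, hs1⟩ := ih1
        obtain ⟨γ2, hγ2, hs2⟩ := ih2
        exact ⟨γ2 * γ1, G.mul_mem hγ2 hγ1, by rw [mul_smul, hs1, hs2]⟩
    · rintro ⟨γ, hγ, hs⟩
      exact Quot.sound ⟨γ, hγ, hs⟩
  -- basic facts about `D`
  have hbdd : ∀ u v, BddBelow {r : ℝ | ∃ a b : Xs,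
      Quot.mk Rq a = u ∧ Quot.mk Rq b = v ∧ r = dist (a : X) (b : X)} := by
    intro u v
    exact ⟨0, by rintro r ⟨a, b, -, -, rfl⟩; exact dist_nonneg⟩
  have hDle : ∀ (a b : Xs), D (Quot.mk Rq a) (Quot.mk Rq b) ≤ dist (a : X) (b : X) := by
    intro a b
    rw [hD]
    exact csInf_le (hbdd _ _) ⟨a, b, rfl, rfl, rfl⟩
  have hDlt : ∀ u v, D u v < R → ∃ a b : Xs,
      Quot.mk Rq a = u ∧ Quot.mk Rq b = v ∧ dist (a : X) (b : X) < R := by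
    intro u v h
    rw [hD] at h
    obtain ⟨a', ha'⟩ := Quot.exists_rep u
    obtain ⟨b', hb'⟩ := Quot.exists_rep v
    obtain ⟨ρ, ⟨a, b, h1, h2, rfl⟩, hρ⟩ :=
      (csInf_lt_iff (hbdd u v) ⟨dist (a' : X) (b' : X), a', b', ha', hb', rfl⟩).mp h
    exact ⟨a, b, h1, h2, hρ⟩
  -- basic open sets in the quotient
  have hopen : ∀ (y₀ : Xs) (ρ : ℝ),
      IsOpen {u : Quot Rq | ∃ z : Xs, Quot.mk Rq z = u ∧ dist (z : X) (y₀ : X) < ρ} := by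
    intro y₀ ρ
    rw [← isQuotientMap_quot_mk.isOpen_preimage]
    have heq : (Quot.mk Rq ⁻¹' {u : Quot Rq | ∃ z : Xs, Quot.mk Rq z = u ∧ dist (z : X) (y₀ : X) < ρ}) =
        ⋃ γ : ↥G, (fun z : Xs => ((γ : Γ))⁻¹ • (z : X)) ⁻¹' (Metric.ball (y₀ : X) ρ) := by
      ext z
      simp only [Set.mem_preimage, Set.mem_iUnion, Set.mem_setOf_eq, Metric.mem_ball]
      constructor
      · rintro ⟨z', hq, hd⟩
        obtain ⟨γ, hγ, hs⟩ := (hclass z' z).mp hq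
        refine ⟨⟨γ, hγ⟩, ?_⟩
        have : (γ : Γ)⁻¹ • (z : X) = (z' : X) := by rw [← hs, inv_smul_smul]
        rw [this]
        exact hd
      · rintro ⟨γ, hd⟩
        refine ⟨⟨(γ : Γ)⁻¹ • (z : X), hXsinv _ (G.inv_mem γ.2) _ z.2⟩, ?_, hd⟩
        exact Quot.sound ⟨(γ : Γ), γ.2, by simp [smul_inv_smul]⟩
    rw [heq]
    exact isOpen_iUnion fun γ =>
      Metric.isOpen_ball.preimage ((hiso _).continuous.comp continuous_subtype_val)
  -- finiteness preliminaries
  haveI : Fintype ↥G := Fintype.ofFinite ↥G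
  have hGle_fin : ∀ H : Subgroup Γ, H ≤ G → Finite H := fun H hle =>
    Finite.of_injective (Subgroup.inclusion hle) (Subgroup.inclusion_injective hle)
  haveI hsubfin : Finite {H : Subgroup Γ // H ≤ G} := by
    refine Finite.of_injective (fun H => ({g : ↥G | (g : Γ) ∈ H.1} : Set ↥G)) ?_
    intro H₁ H₂ hH
    apply Subtype.ext
    ext γ
    constructor
    · intro hγ
      have hγG : γ ∈ G := H₁.2 hγ
      have hmem : (⟨γ, hγG⟩ : ↥G) ∈ {g : ↥G | (g : Γ) ∈ H₁.1} := hγ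
      have hH' : {g : ↥G | (g : Γ) ∈ H₁.1} = {g : ↥G | (g : Γ) ∈ H₂.1} := hH
      rw [hH'] at hmem
      exact hmem
    · intro hγ
      have hγG : γ ∈ G := H₂.2 hγ
      have hmem : (⟨γ, hγG⟩ : ↥G) ∈ {g : ↥G | (g : Γ) ∈ H₂.1} := hγ
      have hH' : {g : ↥G | (g : Γ) ∈ H₁.1} = {g : ↥G | (g : Γ) ∈ H₂.1} := hH
      rw [← hH'] at hmem
      exact hmem
  set n : ℕ := Fintype.card ↥G with hn
  set R' : ℝ := 2 * (R + 4 * R * (n : ℝ)) + 1 with hR'def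
  have h4Rn : (0 : ℝ) ≤ 4 * R * (n : ℝ) :=
    mul_nonneg (by linarith) (Nat.cast_nonneg n)
  have hR'pos : (0 : ℝ) < R' := by rw [hR'def]; linarith
  have key := fun (Hs : {H : Subgroup Γ // H ≤ G}) =>
    hufc Hs.1 (hGle_fin Hs.1 Hs.2) R' hR'pos
  choose S hSpos hS using key
  obtain ⟨T₀, hT₀⟩ := (Set.finite_range S).bddAbove
  refine ⟨max T₀ 1, lt_of_lt_of_le zero_lt_one (le_max_right _ _), ?_⟩
  intro B hBne hBdiam
  -- choose a base point
  obtain ⟨u₀, hu₀⟩ := hBne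
  obtain ⟨x0, hx0⟩ := Quot.exists_rep u₀
  -- the preimage of `B` in `X`
  let Y : Set X := {y | ∃ h : y ∈ Xs, Quot.mk Rq (⟨y, h⟩ : Xs) ∈ B}
  have hYinv : ∀ γ ∈ G, ∀ y ∈ Y, γ • y ∈ Y := by
    rintro γ hγ y ⟨hy, hyB⟩
    refine ⟨hXsinv γ hγ y hy, ?_⟩
    rw [show Quot.mk Rq (⟨γ • y, hXsinv γ hγ y hy⟩ : Xs) = Quot.mk Rq (⟨y, hy⟩ : Xs) from
      (Quot.sound ⟨γ, hγ, rfl⟩).symm]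
    exact hyB
  have hYx0 : (x0 : X) ∈ Y := by
    refine ⟨x0.2, ?_⟩
    rw [show Quot.mk Rq (⟨(x0 : X), x0.2⟩ : Xs) = u₀ from hx0]
    exact hu₀
  have hYball : ∀ y ∈ Y, ∃ g : ↥G, dist y ((g : Γ) • (x0 : X)) < R := by
    rintro y ⟨hy, hyB⟩
    obtain ⟨a, b, ha, hb, hab⟩ := hDlt _ _ (hBdiam u₀ hu₀ _ hyB)
    obtain ⟨γ₁, hγ₁, hs₁⟩ := (hclass a x0).mp (ha.trans hx0.symm)
    obtain ⟨γ₂, hγ₂, hs₂⟩ := (hclass b ⟨y, hy⟩).mp hb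
    have hs₂' : γ₂ • (b : X) = y := hs₂
    have e1 : (γ₂ * γ₁⁻¹) • (x0 : X) = γ₂ • (a : X) := by
      rw [mul_smul, ← hs₁, inv_smul_smul]
    have e2 : dist ((γ₂ * γ₁⁻¹) • (x0 : X)) y < R := by
      rw [e1, ← hs₂', hdist]
      exact hab
    exact ⟨⟨γ₂ * γ₁⁻¹, G.mul_mem hγ₂ (G.inv_mem hγ₁)⟩, by rw [dist_comm]; exact e2⟩
  -- the auxiliary graph on `G`
  let Rel : ↥G → ↥G → Prop := fun g g' => ∃ y ∈ Y, ∃ z ∈ Y,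
    dist y ((g : Γ) • (x0 : X)) < R ∧ dist z ((g' : Γ) • (x0 : X)) < R ∧ dist y z ≤ 2 * R
  let Gr : SimpleGraph ↥G :=
    { Adj := fun g g' => g ≠ g' ∧ Rel g g'
      symm := by
        refine ⟨?_⟩
        rintro g g' ⟨hne, y, hy, z, hz, h1, h2, h3⟩
        exact ⟨hne.symm, z, hz, y, hy, h2, h1, by rwa [dist_comm]⟩
      loopless := ⟨fun g h => h.1 rfl⟩ }
  have hRelReach : ∀ g g' : ↥G, Rel g g' → Gr.Reachable g g' := by
    intro g g' h
    by_cases he : g = g'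
    · subst he; exact SimpleGraph.Reachable.refl _
    · exact SimpleGraph.Adj.reachable ⟨he, h⟩
  have hAdjDist : ∀ g g' : ↥G, Gr.Adj g g' →
      dist ((g : Γ) • (x0 : X)) ((g' : Γ) • (x0 : X)) ≤ 4 * R := by
    rintro g g' ⟨-, y, -, z, -, h1, h2, h3⟩
    calc dist ((g : Γ) • (x0 : X)) ((g' : Γ) • (x0 : X))
        ≤ dist ((g : Γ) • (x0 : X)) y + dist y z + dist z ((g' : Γ) • (x0 : X)) :=
          dist_triangle4 _ _ _ _
      _ ≤ R + (2 * R) + R := by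
          refine add_le_add (add_le_add ?_ h3) h2.le
          rw [dist_comm]; exact h1.le
      _ = 4 * R := by ring
  have hwalkdist : ∀ (g g' : ↥G) (p : Gr.Walk g g'),
      dist ((g : Γ) • (x0 : X)) ((g' : Γ) • (x0 : X)) ≤ 4 * R * p.length := by
    intro g g' p
    induction p with
    | nil => simp
    | @cons u v w h p ih =>
      calc dist ((u : Γ) • (x0 : X)) ((w : Γ) • (x0 : X))
          ≤ dist ((u : Γ) • (x0 : X)) ((v : Γ) • (x0 : X)) +
            dist ((v : Γ) • (x0 : X)) ((w : Γ) • (x0 : X)) := dist_triangle _ _ _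
        _ ≤ 4 * R + 4 * R * p.length := add_le_add (hAdjDist _ _ h) ih
        _ = 4 * R * ((SimpleGraph.Walk.cons h p).length : ℝ) := by
            rw [SimpleGraph.Walk.length_cons]
            push_cast
            ring
  have hreach1 : ∀ g : ↥G, Gr.Reachable 1 g → dist (x0 : X) ((g : Γ) • (x0 : X)) ≤ 4 * R * n := by
    intro g h
    obtain ⟨p⟩ := h
    have hlen : ((p.bypass.length : ℕ) : ℝ) ≤ (n : ℝ) := by
      exact_mod_cast (p.bypass_isPath.length_lt).le
    have hd := hwalkdist 1 g p.bypass
    rw [show ((1 : ↥G) : Γ) • (x0 : X) = (x0 : X) by simp] at hd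
    calc dist (x0 : X) ((g : Γ) • (x0 : X)) ≤ 4 * R * p.bypass.length := hd
      _ ≤ 4 * R * n := by
          apply mul_le_mul_of_nonneg_left hlen
          linarith
  -- the piece of the preimage through `x0`
  let P : Set X := {y | y ∈ Y ∧ ∃ g : ↥G, Gr.Reachable 1 g ∧ dist y ((g : Γ) • (x0 : X)) < R}
  have hPsub : P ⊆ Y := fun y hy => hy.1
  have hPx0 : (x0 : X) ∈ P := by
    refine ⟨hYx0, 1, SimpleGraph.Reachable.refl _, ?_⟩
    rw [show ((1 : ↥G) : Γ) • (x0 : X) = (x0 : X) by simp, dist_self]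
    exact hR
  have hPdistx0 : ∀ y ∈ P, dist y (x0 : X) ≤ R + 4 * R * n := by
    rintro y ⟨-, g, hg, hdg⟩
    calc dist y (x0 : X) ≤ dist y ((g : Γ) • (x0 : X)) + dist ((g : Γ) • (x0 : X)) (x0 : X) :=
          dist_triangle _ _ _
      _ ≤ R + 4 * R * n := add_le_add hdg.le (by rw [dist_comm]; exact hreach1 g hg)
  have hPdiam : Metric.diam P < R' := by
    have hle : Metric.diam P ≤ 2 * (R + 4 * R * n) := by
      refine Metric.diam_le_of_forall_dist_le (by linarith) ?_
      intro a ha b hb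
      calc dist a b ≤ dist a (x0 : X) + dist (x0 : X) b := dist_triangle _ _ _
        _ ≤ (R + 4 * R * n) + (R + 4 * R * n) :=
            add_le_add (hPdistx0 a ha) (by rw [dist_comm]; exact hPdistx0 b hb)
        _ = 2 * (R + 4 * R * n) := by ring
    rw [hR'def]
    linarith
  have hPchain : ∀ y ∈ P, ∀ z ∈ Y, dist z y ≤ 2 * R → z ∈ P := by
    rintro y ⟨hyY, g, hgL, hgd⟩ z hzY hdzy
    obtain ⟨g₂, hg₂⟩ := hYball z hzY
    refine ⟨hzY, g₂, ?_, hg₂⟩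
    exact hgL.trans (hRelReach g g₂ ⟨y, hyY, z, hzY, hgd, hg₂, by rwa [dist_comm]⟩)
  -- translating reachability
  have hmapAdj : ∀ (γ : ↥G) (g g' : ↥G), Gr.Adj g g' → Gr.Adj (γ * g) (γ * g') := by
    rintro γ g g' ⟨hne, y, hy, z, hz, h1, h2, h3⟩
    refine ⟨fun hc => hne (mul_left_cancel hc),
      (γ : Γ) • y, hYinv _ γ.2 _ hy, (γ : Γ) • z, hYinv _ γ.2 _ hz, ?_, ?_, ?_⟩
    · show dist ((γ : Γ) • y) (((γ * g : ↥G) : Γ) • (x0 : X)) < R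
      rw [Subgroup.coe_mul, mul_smul, hdist]
      exact h1
    · show dist ((γ : Γ) • z) (((γ * g' : ↥G) : Γ) • (x0 : X)) < R
      rw [Subgroup.coe_mul, mul_smul, hdist]
      exact h2
    · rw [hdist]
      exact h3
  have hmapReach : ∀ (γ : ↥G) (g g' : ↥G), Gr.Reachable g g' → Gr.Reachable (γ * g) (γ * g') := by
    intro γ g g' h
    obtain ⟨p⟩ := h
    induction p with
    | nil => exact SimpleGraph.Reachable.refl _
    | @cons u v w h p ih => exact (SimpleGraph.Adj.reachable (hmapAdj γ _ _ h)).trans ih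
  -- the stabilizing subgroup of the piece
  have hstab : ∀ γ ∈ G, (∃ p ∈ P, γ • p ∈ P) → ∀ y ∈ P, γ • y ∈ P := by
    rintro γ hγ ⟨p, ⟨hpY, h, hhL, hhd⟩, ⟨hγpY, h', hh'L, hh'd⟩⟩ y ⟨hyY, g, hgL, hgd⟩
    have h1 : dist (γ • p) (((⟨γ, hγ⟩ * h : ↥G) : Γ) • (x0 : X)) < R := by
      rw [Subgroup.coe_mul, mul_smul]
      show dist (γ • p) (γ • ((h : Γ) • (x0 : X))) < R
      rw [hdist]
      exact hhd
    have hrel : Rel h' (⟨γ, hγ⟩ * h) :=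
      ⟨γ • p, hYinv _ hγ _ hpY, γ • p, hYinv _ hγ _ hpY, hh'd, h1, by rw [dist_self]; linarith⟩
    have hL1 : Gr.Reachable 1 (⟨γ, hγ⟩ * h) := hh'L.trans (hRelReach _ _ hrel)
    have hL2 : Gr.Reachable (⟨γ, hγ⟩ * h) ⟨γ, hγ⟩ := by
      have hm := hmapReach ⟨γ, hγ⟩ 1 h hhL
      rw [mul_one] at hm
      exact hm.symm
    have hL3 : Gr.Reachable (⟨γ, hγ⟩ : ↥G) (⟨γ, hγ⟩ * g) := by
      have hm := hmapReach ⟨γ, hγ⟩ 1 g hgL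
      rwa [mul_one] at hm
    refine ⟨hYinv _ hγ _ hyY, ⟨γ, hγ⟩ * g, (hL1.trans hL2).trans hL3, ?_⟩
    rw [Subgroup.coe_mul, mul_smul]
    show dist (γ • y) (γ • ((g : Γ) • (x0 : X))) < R
    rw [hdist]
    exact hgd
  let G' : Subgroup Γ :=
    { carrier := {γ | γ ∈ G ∧ (fun x : X => γ • x) '' P = P}
      one_mem' := by
        refine ⟨G.one_mem, ?_⟩
        have : (fun x : X => (1 : Γ) • x) = id := funext fun x => one_smul _ _
        rw [this, Set.image_id]
      mul_mem' := by
        rintro a b ⟨haG, haP⟩ ⟨hbG, hbP⟩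
        refine ⟨G.mul_mem haG hbG, ?_⟩
        rw [show (fun x : X => (a * b) • x) = (fun x : X => a • x) ∘ (fun x : X => b • x) from
          funext fun x => mul_smul a b x, Set.image_comp, hbP, haP]
      inv_mem' := by
        rintro a ⟨haG, haP⟩
        refine ⟨G.inv_mem haG, ?_⟩
        conv_lhs => rw [← haP]
        rw [← Set.image_comp,
          show ((fun x : X => a⁻¹ • x) ∘ (fun x : X => a • x)) = id from
            funext fun x => inv_smul_smul a x, Set.image_id] }
  have hG'le : G' ≤ G := fun γ hγ => hγ.1
  have hG'crit : ∀ γ ∈ G, (∃ p ∈ P, γ • p ∈ P) → γ ∈ G' := by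
    intro γ hγ hex
    refine ⟨hγ, Set.Subset.antisymm ?_ ?_⟩
    · rintro _ ⟨p, hp, rfl⟩
      exact hstab γ hγ hex p hp
    · intro y hy
      obtain ⟨p, hp, hp'⟩ := hex
      have hinv : ∀ y' ∈ P, γ⁻¹ • y' ∈ P :=
        hstab γ⁻¹ (G.inv_mem hγ) ⟨γ • p, hp', by rwa [inv_smul_smul]⟩
      exact ⟨γ⁻¹ • y, hinv y hy, smul_inv_smul γ y⟩
  -- apply uniform `Fin`-contractibility to the piece
  obtain ⟨HH, hHcont, hH0, ⟨z0, hz0⟩, hHS, hHequi⟩ :=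
    hS ⟨G', hG'le⟩ P ⟨(x0 : X), hPx0⟩ (fun g hg => hg.2)
      ((Metric.isBounded_iff_subset_closedBall (x0 : X)).mpr
        ⟨R + 4 * R * n, fun y hy => Metric.mem_closedBall.mpr (hPdistx0 y hy)⟩) hPdiam
  -- the homotopy stays in `Xs`
  have hmemXs : ∀ b ∈ P, ∀ t ∈ Set.Icc (0 : ℝ) 1, HH b t ∈ Xs := by
    intro b hb t ht
    obtain ⟨hbXs, -⟩ := hPsub hb
    rw [hXs] at hbXs
    obtain ⟨H₀, hH₀𝒮, hfix⟩ := hbXs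
    rw [hXs]
    refine ⟨H₀, hH₀𝒮, ?_⟩
    intro h hh
    have hhG : h ∈ G := h𝒮sub H₀ hH₀𝒮 hh
    have hhG' : h ∈ G' := hG'crit h hhG ⟨b, hb, by rw [hfix h hh]; exact hb⟩
    have hq := hHequi h hhG' b hb t ht
    rw [hfix h hh] at hq
    exact hq.symm
  -- well-definedness of the induced homotopy on the quotient
  have hwd : ∀ a b : Xs, (a : X) ∈ P → (b : X) ∈ P → Quot.mk Rq a = Quot.mk Rq b →
      ∀ t ∈ Set.Icc (0 : ℝ) 1, ∃ γ ∈ G, γ • (HH (a : X) t) = HH (b : X) t := by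
    intro a b haP hbP hq t ht
    obtain ⟨γ, hγ, hs⟩ := (hclass a b).mp hq
    have hγG' : γ ∈ G' := hG'crit γ hγ ⟨(a : X), haP, by rw [hs]; exact hbP⟩
    refine ⟨γ, hγ, ?_⟩
    rw [← hHequi γ hγG' _ haP t ht, hs]
  -- a section of the quotient map over `B` with values in `P`
  have hsec : ∀ u ∈ B, ∃ y : Xs, (y : X) ∈ P ∧ Quot.mk Rq y = u := by
    intro u hu
    obtain ⟨a, b, ha, hb, hab⟩ := hDlt _ _ (hBdiam u₀ hu₀ u hu)
    obtain ⟨γ₁, hγ₁, hs₁⟩ := (hclass a x0).mp (ha.trans hx0.symm)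
    have hyXs : γ₁ • (b : X) ∈ Xs := hXsinv _ hγ₁ _ b.2
    have hyq : Quot.mk Rq (⟨γ₁ • (b : X), hyXs⟩ : Xs) = u :=
      (Quot.sound ⟨γ₁, hγ₁, rfl⟩ : Quot.mk Rq b = _).symm.trans hb
    have hyd : dist (γ₁ • (b : X)) (((1 : ↥G) : Γ) • (x0 : X)) < R := by
      rw [show ((1 : ↥G) : Γ) • (x0 : X) = (x0 : X) by simp, ← hs₁, hdist, dist_comm]
      exact hab
    refine ⟨⟨γ₁ • (b : X), hyXs⟩, ⟨⟨hyXs, ?_⟩, 1, SimpleGraph.Reachable.refl _, hyd⟩, hyq⟩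
    rw [show Quot.mk Rq (⟨γ₁ • (b : X), hyXs⟩ : Xs) = u from hyq]
    exact hu
  choose sec hsecP hsecQ using hsec
  -- `z0` lies in `Xs`
  have h01 : (0 : ℝ) ∈ Set.Icc (0 : ℝ) 1 := Set.left_mem_Icc.mpr zero_le_one
  have h11 : (1 : ℝ) ∈ Set.Icc (0 : ℝ) 1 := Set.right_mem_Icc.mpr zero_le_one
  have hz0Xs : z0 ∈ Xs := by
    rw [← hz0 _ hPx0]
    exact hmemXs _ hPx0 1 h11
  have hcoe : ∀ t : ℝ, t ∈ Set.Icc (0 : ℝ) 1 →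
      ((Set.projIcc (0 : ℝ) 1 zero_le_one t : ℝ)) = t := by
    intro t ht
    rw [Set.projIcc_of_mem zero_le_one ht]
  -- the contraction of `B`
  refine ⟨fun u t => if h : u ∈ B then
      Quot.mk Rq (⟨HH ((sec u h : Xs) : X) ((Set.projIcc (0 : ℝ) 1 zero_le_one t : ℝ)),
        hmemXs _ (hsecP u h) _ (Set.projIcc (0 : ℝ) 1 zero_le_one t).2⟩ : Xs)
    else u, ?_, ?_, ?_, ?_⟩
  · -- continuity
    have hmkproj : ∀ (u' : Quot Rq) (hu' : u' ∈ B) (t' : ℝ) (ht' : t' ∈ Set.Icc (0 : ℝ) 1),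
        Quot.mk Rq (⟨HH ((sec u' hu' : Xs) : X) ((Set.projIcc (0 : ℝ) 1 zero_le_one t' : ℝ)),
            hmemXs _ (hsecP u' hu') _ (Set.projIcc (0 : ℝ) 1 zero_le_one t').2⟩ : Xs) =
        Quot.mk Rq (⟨HH ((sec u' hu' : Xs) : X) t', hmemXs _ (hsecP u' hu') t' ht'⟩ : Xs) := by
      intro u' hu' t' ht'
      refine congrArg _ (Subtype.ext ?_)
      show HH ((sec u' hu' : Xs) : X) ((Set.projIcc (0 : ℝ) 1 zero_le_one t' : ℝ)) = _
      rw [hcoe t' ht']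
    rintro ⟨u, t⟩ ⟨huB, htI⟩
    refine Filter.tendsto_def.mpr fun V hV => ?_
    obtain ⟨O, hOV, hOopen, hFO⟩ := mem_nhds_iff.mp hV
    have hqO : IsOpen ((Quot.mk Rq ⁻¹' O : Set Xs)) := hOopen.preimage continuous_quot_mk
    obtain ⟨O'', hO''open, hO''eq⟩ := isOpen_induced_iff.mp hqO
    have hy₀P := hsecP u huB
    simp only [dif_pos huB] at hFO
    rw [hmkproj u huB t htI] at hFO
    have hb₀mem : (⟨HH ((sec u huB : Xs) : X) t, hmemXs _ (hsecP u huB) t htI⟩ : Xs) ∈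
        Quot.mk Rq ⁻¹' O := hFO
    rw [← hO''eq] at hb₀mem
    obtain ⟨ε, hεpos, hball⟩ :=
      Metric.isOpen_iff.mp hO''open (HH ((sec u huB : Xs) : X) t) hb₀mem
    obtain ⟨δ, hδpos, hδp⟩ := Metric.continuousWithinAt_iff.mp
      (hHcont (((sec u huB : Xs) : X), t) ⟨hy₀P, htI⟩) ε hεpos
    set ρ := min δ R with hρdef
    have hρpos : 0 < ρ := lt_min hδpos hR
    refine mem_nhdsWithin.mpr
      ⟨{u' | ∃ z : Xs, Quot.mk Rq z = u' ∧ dist (z : X) ((sec u huB : Xs) : X) < ρ} ×ˢ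
          Metric.ball t δ,
        (hopen (sec u huB) ρ).prod Metric.isOpen_ball,
        ⟨⟨sec u huB, hsecQ u huB, by rw [dist_self]; exact hρpos⟩, Metric.mem_ball_self hδpos⟩,
        ?_⟩
    rintro ⟨u', t'⟩ ⟨⟨⟨z, hzq, hzd⟩, ht'd⟩, hu'B, ht'I⟩
    have hzY : (z : X) ∈ Y := by
      refine ⟨z.2, ?_⟩
      rw [show Quot.mk Rq (⟨(z : X), z.2⟩ : Xs) = u' from hzq]
      exact hu'B
    have hzP : (z : X) ∈ P := by
      refine hPchain _ hy₀P _ hzY ?_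
      have h1 := min_le_right δ R
      linarith [hzd.le]
    simp only [Set.mem_preimage, dif_pos hu'B]
    rw [hmkproj u' hu'B t' ht'I]
    obtain ⟨γ, hγG, hγs⟩ := hwd (sec u' hu'B) z (hsecP u' hu'B) hzP
      ((hsecQ u' hu'B).trans hzq.symm) t' ht'I
    rw [show Quot.mk Rq (⟨HH ((sec u' hu'B : Xs) : X) t', hmemXs _ (hsecP u' hu'B) t' ht'I⟩ : Xs) =
        Quot.mk Rq (⟨HH ((z : Xs) : X) t', hmemXs _ hzP t' ht'I⟩ : Xs) from
      Quot.sound ⟨γ, hγG, hγs⟩]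
    apply hOV
    have hzO'' : HH ((z : Xs) : X) t' ∈ O'' := by
      apply hball
      rw [Metric.mem_ball]
      have hdp : dist ((((z : Xs) : X), t') : X × ℝ) ((((sec u huB : Xs) : X), t) : X × ℝ) < δ := by
        rw [Prod.dist_eq]
        exact max_lt (lt_of_lt_of_le hzd (min_le_left _ _)) (Metric.mem_ball.mp ht'd)
      exact hδp ⟨hzP, ht'I⟩ hdp
    have hfin : (⟨HH ((z : Xs) : X) t', hmemXs _ hzP t' ht'I⟩ : Xs) ∈ Subtype.val ⁻¹' O'' := hzO''
    rw [hO''eq] at hfin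
    exact hfin
  · -- starts at the identity
    intro u hu
    simp only [dif_pos hu]
    refine Eq.trans ?_ (hsecQ u hu)
    refine congrArg _ (Subtype.ext ?_)
    show HH ((sec u hu : Xs) : X) ((Set.projIcc (0 : ℝ) 1 zero_le_one 0 : ℝ)) = ((sec u hu : Xs) : X)
    rw [hcoe 0 h01]
    exact hH0 _ (hsecP u hu)
  · -- ends at a point
    refine ⟨Quot.mk Rq (⟨z0, hz0Xs⟩ : Xs), ?_⟩
    intro u hu
    simp only [dif_pos hu]
    refine congrArg _ (Subtype.ext ?_)
    show HH ((sec u hu : Xs) : X) ((Set.projIcc (0 : ℝ) 1 zero_le_one 1 : ℝ)) = z0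
    rw [hcoe 1 h11]
    exact hz0 _ (hsecP u hu)
  · -- stays near `B`
    intro u hu t ht
    simp only [dif_pos hu]
    obtain ⟨b', hb'P, hb'd⟩ := hHS _ (hsecP u hu) _ (Set.projIcc (0 : ℝ) 1 zero_le_one t).2
    obtain ⟨hb'Xs, hb'B⟩ := hPsub hb'P
    refine ⟨Quot.mk Rq (⟨b', hb'Xs⟩ : Xs), hb'B, ?_⟩
    refine le_trans (hDle _ _) (le_trans hb'd ?_)
    exact le_trans (hT₀ (Set.mem_range_self _)) (le_max_left _ _)
end

section
/- Let X be a path metric space and U an open cover of dimension at most n with Lebesgue number R > 0, and let g : X → ℓ²(U) satisfy ‖g(x) − g(y)‖₂ ≤ 4(n+1)·d(x,y)/R for all x, y with d(x,y) ≤ R, together with the property that whenever d(x,y) ≤ R, g(x) and g(y) lie in simplices of the nerve sharing a common vertex. Then with respect to the Euclidean path length metric d_pl on the nerve |U|, one has d_pl(g(x), g(y)) ≤ C_n · d(x,y)/R for all x, y ∈ X, where C_n = 12·√(2n+1)·(n+1). -/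
/-!
Near the diagonal, `g x` and `g y` lie in faces `σ`, `τ` of the nerve with a common vertex `V`.
Pushing the mass that `p = g x` puts on `σ \ τ` onto `V` gives a point `r` of the face `σ ∩ τ`
with `‖r - p‖ ≤ √(#σ) ‖p - q‖` (Cauchy–Schwarz), and the segments `[p, r] ⊆ σ`, `[r, q] ⊆ τ`
give `d_pl(p, q) ≤ (1 + 2√(n + 1)) ‖p - q‖ ≤ 3√(2n + 1) ‖p - q‖`. This is a Lipschitz bound at
scales `≤ R`; since `d_pl` satisfies the triangle inequality and `X` is a path metric space,
cutting an almost shortest path from `x` to `y` into pieces shorter than `R` makes it global.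
-/

open scoped ENNReal
open Set Filter Topology

section PathEDist

variable {E : Type*} [PseudoEMetricSpace E]

noncomputable def pathEDistIn (N : Set E) (a b : E) : ℝ≥0∞ :=
  sInf {L | ∃ γ : ℝ → E, ContinuousOn γ (Icc 0 1) ∧ γ 0 = a ∧ γ 1 = b ∧
    (∀ u ∈ Icc (0 : ℝ) 1, γ u ∈ N) ∧ L = eVariationOn γ (Icc 0 1)}

theorem pathEDistIn_le_eVariationOn {N : Set E} {γ : ℝ → E} {s t : ℝ} (hst : s ≤ t)
    (hγ : ContinuousOn γ (Icc s t)) (hN : MapsTo γ (Icc s t) N) :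
    pathEDistIn N (γ s) (γ t) ≤ eVariationOn γ (Icc s t) := by
  set η : ℝ → ℝ := ⇑(AffineMap.lineMap (k := ℝ) s t)
  have hη : η '' Icc 0 1 = Icc s t := by
    rw [← segment_eq_image_lineMap, segment_eq_Icc hst]
  have hmaps : MapsTo η (Icc 0 1) (Icc s t) := hη ▸ mapsTo_image η _
  unfold pathEDistIn
  refine (sInf_le ?_).trans_eq (b := eVariationOn (γ ∘ η) (Icc 0 1)) ?_
  · exact ⟨γ ∘ η, hγ.comp AffineMap.lineMap_continuous.continuousOn hmaps, by simp [η],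
      by simp [η], fun u hu => hN (hmaps hu), rfl⟩
  · rw [eVariationOn.comp_eq_of_monotoneOn γ η ((AffineMap.lineMap_mono hst).monotoneOn _), hη]

theorem pathEDistIn_triangle (N : Set E) (a b c : E) :
    pathEDistIn N a c ≤ pathEDistIn N a b + pathEDistIn N b c := by
  unfold pathEDistIn
  rw [ENNReal.sInf_add]
  refine le_iInf₂ fun _ h₁ => ?_
  obtain ⟨γ₁, hγ₁, rfl, h₁b, h₁N, rfl⟩ := h₁
  rw [ENNReal.add_sInf]
  refine le_iInf₂ fun _ h₂ => ?_
  obtain ⟨γ₂, hγ₂, h₂b, rfl, h₂N, rfl⟩ := h₂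
  have hshift : (· - 1) '' Icc (1 : ℝ) 2 = Icc 0 1 := by
    rw [image_sub_const_Icc]; norm_num
  set γ := piecewise (Iic 1) γ₁ (fun t => γ₂ (t - 1))
  have h₁ : EqOn γ γ₁ (Icc 0 1) := fun t ht => piecewise_eq_of_mem _ _ _ ht.2
  have h₂ : EqOn γ (γ₂ ∘ (· - 1)) (Icc 1 2) := by
    intro t ht
    rcases ht.1.eq_or_lt with rfl | ht1
    · simp [γ, h₁b, h₂b]
    · exact piecewise_eq_of_notMem _ _ _ (not_le.2 ht1)
  have hcont : ContinuousOn γ (Icc 0 2) := by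
    rw [← Icc_union_Icc_eq_Icc zero_le_one one_le_two]
    refine ContinuousOn.union_of_isClosed (hγ₁.congr h₁) (ContinuousOn.congr ?_ h₂)
      isClosed_Icc isClosed_Icc
    exact hγ₂.comp (continuous_sub_right 1).continuousOn (hshift ▸ mapsTo_image _ _)
  have hmaps : MapsTo γ (Icc 0 2) N := by
    rw [← Icc_union_Icc_eq_Icc zero_le_one one_le_two]
    rintro t (ht | ht)
    · rw [h₁ ht]; exact h₁N t ht
    · rw [h₂ ht]; exact h₂N _ (hshift ▸ mem_image_of_mem _ ht)
  have hvar : eVariationOn γ (Icc 0 2) =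
      eVariationOn γ₁ (Icc 0 1) + eVariationOn γ₂ (Icc 0 1) := by
    have := eVariationOn.Icc_add_Icc γ zero_le_one one_le_two (mem_univ 1)
    rw [univ_inter, univ_inter, univ_inter] at this
    rw [← this, eVariationOn.eq_of_eqOn h₁, eVariationOn.eq_of_eqOn h₂,
      eVariationOn.comp_eq_of_monotoneOn _ _ fun _ _ _ _ h => sub_le_sub_right h 1, hshift]
  have hγ0 : γ 0 = γ₁ 0 := h₁ (left_mem_Icc.2 zero_le_one)
  have hγ2 : γ 2 = γ₂ 1 := (h₂ (right_mem_Icc.2 one_le_two)).trans (by norm_num)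
  show pathEDistIn N (γ₁ 0) (γ₂ 1) ≤ _
  rw [← hγ0, ← hγ2, ← hvar]
  exact pathEDistIn_le_eVariationOn zero_le_two hcont hmaps

theorem pathEDistIn_le_edist {F : Type*} [SeminormedAddCommGroup F] [NormedSpace ℝ F]
    {N : Set F} {a b : F} (h : segment ℝ a b ⊆ N) : pathEDistIn N a b ≤ edist a b := by
  have hmaps : MapsTo (AffineMap.lineMap a b) (Icc (0 : ℝ) 1) N := by
    rw [segment_eq_image_lineMap] at h
    exact fun t ht => h (mem_image_of_mem _ ht)
  calc pathEDistIn N a b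
      ≤ eVariationOn (AffineMap.lineMap a b) (Icc (0 : ℝ) 1) := by
        convert pathEDistIn_le_eVariationOn zero_le_one
          AffineMap.lineMap_continuous.continuousOn hmaps <;> simp
    _ ≤ nndist a b * eVariationOn id (Icc (0 : ℝ) 1) :=
        ((lipschitzWith_lineMap a b).lipschitzOnWith (s := univ)).comp_eVariationOn_le
          (mapsTo_univ _ _)
    _ = edist a b := by simp [eVariationOn_id_Icc]

end PathEDist

section LocalToGlobal

variable {X : Type*} {D : X → X → ℝ≥0∞}

theorem le_sum_range_of_triangle (htri : ∀ a b c, D a c ≤ D a b + D b c)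
    (hself : ∀ a, D a a = 0) (z : ℕ → X) (k : ℕ) :
    D (z 0) (z k) ≤ ∑ i ∈ Finset.range k, D (z i) (z (i + 1)) := by
  induction k with
  | zero => simp [hself]
  | succ k ih =>
    rw [Finset.sum_range_succ]
    exact (htri _ _ _).trans (add_le_add_left ih _)

variable [PseudoMetricSpace X] {K R : ℝ}

theorem le_ofReal_mul_eVariationOn_of_local (htri : ∀ a b c, D a c ≤ D a b + D b c)
    (hK : 0 ≤ K) (hR : 0 < R) (hloc : ∀ a b, dist a b ≤ R → D a b ≤ ENNReal.ofReal (K * dist a b))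
    {γ : ℝ → X} (hγ : ContinuousOn γ (Icc 0 1)) :
    D (γ 0) (γ 1) ≤ ENNReal.ofReal K * eVariationOn γ (Icc 0 1) := by
  have hloc' : ∀ a b, dist a b ≤ R → D a b ≤ ENNReal.ofReal K * edist b a := fun a b hab => by
    rw [edist_dist, dist_comm, ← ENNReal.ofReal_mul hK]; exact hloc a b hab
  have hself : ∀ a, D a a = 0 := fun a => le_zero_iff.1 <| by
    simpa using hloc a a (by simpa using hR.le)
  obtain ⟨δ, hδ, hγδ⟩ := Metric.uniformContinuousOn_iff.1
    (isCompact_Icc.uniformContinuousOn_of_continuous hγ) R hR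
  obtain ⟨k, hk⟩ := exists_nat_one_div_lt hδ
  set u : ℕ → ℝ := fun i => i / (k + 1)
  have hu : ∀ i ∈ Icc 0 (k + 1), u i ∈ Icc 0 1 := fun i hi => by
    refine ⟨by positivity, div_le_one_of_le₀ ?_ (by positivity)⟩
    exact_mod_cast hi.2
  have hu_mono : MonotoneOn u (Icc 0 (k + 1)) := fun i _ j _ hij => by
    simp only [u]; gcongr
  have hstep : ∀ i, dist (u i) (u (i + 1)) < δ := fun i => by
    rw [Real.dist_eq, abs_sub_comm, abs_of_nonneg (sub_nonneg.2 (by simp only [u]; gcongr; simp))]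
    simpa [u, add_div] using hk
  calc D (γ 0) (γ 1) = D (γ (u 0)) (γ (u (k + 1))) := by
        simp [u, div_self (Nat.cast_add_one_ne_zero (R := ℝ) k)]
    _ ≤ ∑ i ∈ Finset.range (k + 1), D (γ (u i)) (γ (u (i + 1))) :=
      le_sum_range_of_triangle htri hself _ _
    _ ≤ ∑ i ∈ Finset.range (k + 1), ENNReal.ofReal K * edist (γ (u (i + 1))) (γ (u i)) := by
      refine Finset.sum_le_sum fun i hi => hloc' _ _ (hγδ _ ?_ _ ?_ (hstep i)).le
      · exact hu i ⟨Nat.zero_le _, (Finset.mem_range.1 hi).le⟩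
      · exact hu (i + 1) ⟨Nat.zero_le _, Finset.mem_range.1 hi⟩
    _ ≤ ENNReal.ofReal K * eVariationOn γ (Icc 0 1) := by
      rw [← Finset.mul_sum, Finset.range_eq_Ico]
      gcongr
      exact eVariationOn.sum_le_of_monotoneOn_Icc hu_mono hu

theorem le_ofReal_mul_dist_of_local
    (hpath : ∀ x y : X, ∀ ε > (0 : ℝ), ∃ γ : ℝ → X,
      ContinuousOn γ (Icc 0 1) ∧ γ 0 = x ∧ γ 1 = y ∧
      eVariationOn γ (Icc 0 1) ≤ ENNReal.ofReal (dist x y + ε))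
    (htri : ∀ a b c, D a c ≤ D a b + D b c) (hK : 0 ≤ K) (hR : 0 < R)
    (hloc : ∀ a b, dist a b ≤ R → D a b ≤ ENNReal.ofReal (K * dist a b)) (x y : X) :
    D x y ≤ ENNReal.ofReal (K * dist x y) := by
  have hε : ∀ ε > (0 : ℝ), D x y ≤ ENNReal.ofReal (K * (dist x y + ε)) := fun ε hε => by
    obtain ⟨γ, hγ, rfl, rfl, hvar⟩ := hpath x y ε hε
    rw [ENNReal.ofReal_mul hK]
    exact (le_ofReal_mul_eVariationOn_of_local htri hK hR hloc hγ).trans (by gcongr)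
  have hlim : Tendsto (fun ε => ENNReal.ofReal (K * (dist x y + ε))) (𝓝[>] 0)
      (𝓝 (ENNReal.ofReal (K * dist x y))) := by
    refine ENNReal.tendsto_ofReal (tendsto_nhdsWithin_of_tendsto_nhds ?_)
    simpa using ((continuous_const.add continuous_id).const_mul K).tendsto (0 : ℝ)
  exact ge_of_tendsto hlim (eventually_nhdsWithin_of_forall hε)

end LocalToGlobal

section Simplex

variable {ι : Type*}

def lpSimplex (T : Finset ι) : Set (lp (fun _ : ι => ℝ) 2) :=
  {z | (∀ i ∉ T, z i = 0) ∧ (∀ i, 0 ≤ z i) ∧ ∑ i ∈ T, z i = 1}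

theorem lpSimplex_mono {S T : Finset ι} (h : S ⊆ T) : lpSimplex S ⊆ lpSimplex T := by
  rintro z ⟨hz0, hnn, hsum⟩
  refine ⟨fun i hi => hz0 i fun hS => hi (h hS), hnn, ?_⟩
  rw [← Finset.sum_subset h fun i _ hi => hz0 i hi, hsum]

theorem convex_lpSimplex (T : Finset ι) : Convex ℝ (lpSimplex T) := by
  rintro x ⟨hx0, hxnn, hx1⟩ y ⟨hy0, hynn, hy1⟩ a b ha hb hab
  have hcoe : ∀ i, (a • x + b • y) i = a * x i + b * y i := fun i => rfl
  refine ⟨fun i hi => by simp [hcoe, hx0 i hi, hy0 i hi],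
    fun i => hcoe i ▸ add_nonneg (mul_nonneg ha (hxnn i)) (mul_nonneg hb (hynn i)), ?_⟩
  simp [hcoe, Finset.sum_add_distrib, ← Finset.mul_sum, hx1, hy1, hab]

theorem lp.norm_sq_eq_sum_sq_of_support_subset (f : lp (fun _ : ι => ℝ) 2) {s : Finset ι}
    (hf : ∀ i ∉ s, f i = 0) : ‖f‖ ^ 2 = ∑ i ∈ s, f i ^ 2 := by
  have := lp.norm_rpow_eq_tsum (p := 2) (by norm_num) f
  simp only [ENNReal.toReal_ofNat, Real.rpow_two, Real.norm_eq_abs, sq_abs] at this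
  rw [this, tsum_eq_sum fun i hi => by simp [hf i hi]]

theorem lp.sum_sq_le_norm_sq (f : lp (fun _ : ι => ℝ) 2) (s : Finset ι) :
    ∑ i ∈ s, f i ^ 2 ≤ ‖f‖ ^ 2 := by
  simpa [Real.rpow_two] using lp.sum_rpow_le_norm_rpow (p := 2) (by norm_num) f s

open Finset in
theorem exists_mem_lpSimplex_inter_norm_sub_le [DecidableEq ι] {σ τ : Finset ι} {V : ι}
    (hVσ : V ∈ σ) (hVτ : V ∈ τ) {p q : lp (fun _ : ι => ℝ) 2} (hp : p ∈ lpSimplex σ)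
    (hq : ∀ i ∉ τ, q i = 0) :
    ∃ r ∈ lpSimplex (σ ∩ τ), ‖r - p‖ ≤ √(#σ : ℝ) * ‖p - q‖ := by
  obtain ⟨hp0, hpnn, hp1⟩ := hp
  have hV : V ∈ σ ∩ τ := mem_inter.2 ⟨hVσ, hVτ⟩
  -- `r` keeps the coordinates of `p` on `σ ∩ τ` and moves the mass `m` of `σ \ τ` onto `V`.
  set m := ∑ i ∈ σ \ τ, p i
  set w : ι → ℝ := fun i => if i ∈ σ ∩ τ then p i + (if i = V then m else 0) else 0
  have hw : Memℓp w 2 := by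
    refine (memℓp_zero ((σ ∩ τ).finite_toSet.subset fun i hi => ?_)).of_exponent_ge (by norm_num)
    by_contra h
    exact hi (if_neg h)
  let r : lp (fun _ : ι => ℝ) 2 := ⟨w, hw⟩
  have hr : ∀ i, r i = w i := fun _ => rfl
  have hm : 0 ≤ m := sum_nonneg fun i _ => hpnn i
  refine ⟨r, ⟨fun i hi => (hr i).trans (if_neg hi), fun i => ?_, ?_⟩, ?_⟩
  · simp only [hr, w]
    split_ifs <;> first | positivity | linarith [hpnn i]
  · rw [sum_congr rfl fun i hi => (hr i).trans (if_pos hi), sum_add_distrib, sum_ite_eq',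
      if_pos hV, sum_inter_add_sum_sdiff, hp1]
  have hsub : ∀ i, (r - p) i = w i - p i := fun _ => rfl
  have hsq : ‖r - p‖ ^ 2 = m ^ 2 + ∑ i ∈ σ \ τ, p i ^ 2 := by
    rw [lp.norm_sq_eq_sum_sq_of_support_subset _ (s := σ)
      fun i hi => by simp [hsub, w, hi, hp0 i hi], ← sum_inter_add_sum_sdiff σ τ]
    congr 1
    · calc ∑ i ∈ σ ∩ τ, (r - p) i ^ 2 = ∑ i ∈ σ ∩ τ, if i = V then m ^ 2 else 0 :=
            sum_congr rfl fun i hi => by simp only [hsub, w, if_pos hi]; split_ifs <;> ring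
        _ = m ^ 2 := by simp [hV]
    · exact sum_congr rfl fun i hi => by simp [hsub, w, (mem_sdiff.1 hi).2]
  have hdiff : ∑ i ∈ σ \ τ, p i ^ 2 ≤ ‖p - q‖ ^ 2 :=
    calc ∑ i ∈ σ \ τ, p i ^ 2 = ∑ i ∈ σ \ τ, (p - q) i ^ 2 := sum_congr rfl fun i hi => by
            rw [lp.coeFn_sub, Pi.sub_apply, hq i (mem_sdiff.1 hi).2, sub_zero]
      _ ≤ ‖p - q‖ ^ 2 := lp.sum_sq_le_norm_sq _ _
  have hcard : (#(σ \ τ) : ℝ) + 1 ≤ #σ := by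
    have := card_sdiff_add_card_inter σ τ
    have := card_pos.2 ⟨V, hV⟩
    exact_mod_cast (by omega : #(σ \ τ) + 1 ≤ #σ)
  have hm2 : m ^ 2 ≤ #(σ \ τ) * ∑ i ∈ σ \ τ, p i ^ 2 := sq_sum_le_card_mul_sum_sq
  rw [← Real.sqrt_sq (norm_nonneg (p - q)), ← Real.sqrt_mul (Nat.cast_nonneg _)]
  refine (le_abs_self _).trans (Real.abs_le_sqrt ?_)
  nlinarith [mul_le_mul_of_nonneg_left hdiff (by positivity : (0 : ℝ) ≤ #(σ \ τ) + 1),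
    mul_le_mul_of_nonneg_right hcard (sq_nonneg ‖p - q‖)]

theorem pathEDistIn_le_of_mem_lpSimplex {N : Set (lp (fun _ : ι => ℝ) 2)} {σ τ : Finset ι}
    {V : ι} (hVσ : V ∈ σ) (hVτ : V ∈ τ) {p q : lp (fun _ : ι => ℝ) 2} (hp : p ∈ lpSimplex σ)
    (hq : q ∈ lpSimplex τ) (hσN : lpSimplex σ ⊆ N) (hτN : lpSimplex τ ⊆ N) :
    pathEDistIn N p q ≤ ENNReal.ofReal ((1 + 2 * √(σ.card : ℝ)) * ‖p - q‖) := by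
  classical
  obtain ⟨r, hr, hrp⟩ := exists_mem_lpSimplex_inter_norm_sub_le hVσ hVτ hp hq.1
  have hpr : segment ℝ p r ⊆ N :=
    ((convex_lpSimplex σ).segment_subset hp (lpSimplex_mono Finset.inter_subset_left hr)).trans hσN
  have hrq : segment ℝ r q ⊆ N :=
    ((convex_lpSimplex τ).segment_subset (lpSimplex_mono Finset.inter_subset_right hr) hq).trans hτN
  calc pathEDistIn N p q ≤ edist p r + edist r q :=
        (pathEDistIn_triangle N p r q).trans (add_le_add (pathEDistIn_le_edist hpr)
          (pathEDistIn_le_edist hrq))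
    _ ≤ ENNReal.ofReal ((1 + 2 * √(σ.card : ℝ)) * ‖p - q‖) := by
      rw [edist_dist, edist_dist, ← ENNReal.ofReal_add dist_nonneg dist_nonneg]
      refine ENNReal.ofReal_le_ofReal ?_
      have hpr : dist p r ≤ √(σ.card : ℝ) * ‖p - q‖ := by rwa [dist_comm, dist_eq_norm]
      have hrq : dist r q ≤ dist p r + ‖p - q‖ := by
        rw [← dist_eq_norm, dist_comm p r]; exact dist_triangle r p q
      linarith

end Simplex

theorem one_add_two_mul_sqrt_le {k n : ℕ} (hk : k ≤ n + 1) :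
    1 + 2 * √(k : ℝ) ≤ 3 * √(2 * n + 1) := by
  have hkn : √(k : ℝ) ≤ √(n + 1) := Real.sqrt_le_sqrt (by exact_mod_cast hk)
  have hs : √((n : ℝ) + 1) ^ 2 = n + 1 := Real.sq_sqrt (by positivity)
  have ht : √(2 * (n : ℝ) + 1) ^ 2 = 2 * n + 1 := Real.sq_sqrt (by positivity)
  nlinarith [Real.sqrt_nonneg ((n : ℝ) + 1), Real.sqrt_nonneg (2 * (n : ℝ) + 1),
    sq_nonneg (√((n : ℝ) + 1) - 1)]

theorem nerve_map_path_length_estimate_general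
    {X : Type*} [MetricSpace X] (n : ℕ) (R : ℝ) (hR : 0 < R)
    (𝒰 : Set (Set X))
    -- `X` is a path metric space:
    (hpath : ∀ x y : X, ∀ ε > (0 : ℝ), ∃ γ : ℝ → X,
      ContinuousOn γ (Set.Icc 0 1) ∧ γ 0 = x ∧ γ 1 = y ∧
      eVariationOn γ (Set.Icc 0 1) ≤ ENNReal.ofReal (dist x y + ε))
    (g : X → lp (fun _ : ↥𝒰 => ℝ) 2)
    -- Lipschitz-type estimate at scale `≤ R`:
    (hlip : ∀ x y : X, dist x y ≤ R → ‖g x - g y‖ ≤ 4 * (n + 1) * dist x y / R)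
    -- nearby points land in simplices of the nerve sharing a common vertex:
    (hshare : ∀ x y : X, dist x y ≤ R → ∃ σ τ : Finset ↥𝒰,
      σ.card ≤ n + 1 ∧ τ.card ≤ n + 1 ∧ (∃ V : ↥𝒰, V ∈ σ ∧ V ∈ τ) ∧
      (⋂ U ∈ σ, (U : Set X)).Nonempty ∧ (⋂ U ∈ τ, (U : Set X)).Nonempty ∧
      (∀ U : ↥𝒰, U ∉ σ → g x U = 0) ∧ (∀ U : ↥𝒰, U ∉ τ → g y U = 0) ∧
      (∀ U : ↥𝒰, 0 ≤ g x U) ∧ (∀ U : ↥𝒰, 0 ≤ g y U) ∧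
      (∑ U ∈ σ, g x U) = 1 ∧ (∑ U ∈ τ, g y U) = 1)
    -- the geometric realization of the nerve inside `ℓ²(𝒰)`:
    (N : Set (lp (fun _ : ↥𝒰 => ℝ) 2))
    (hN : N = {z | ∃ T : Finset ↥𝒰, (⋂ U ∈ T, (U : Set X)).Nonempty ∧
      (∀ U : ↥𝒰, U ∉ T → z U = 0) ∧ (∀ U : ↥𝒰, 0 ≤ z U) ∧ (∑ U ∈ T, z U) = 1})
    -- the Euclidean path length metric on the nerve:
    (dpl : lp (fun _ : ↥𝒰 => ℝ) 2 → lp (fun _ : ↥𝒰 => ℝ) 2 → ℝ≥0∞)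
    (hdpl : dpl = fun a b => sInf {L : ℝ≥0∞ | ∃ γ : ℝ → lp (fun _ : ↥𝒰 => ℝ) 2,
      ContinuousOn γ (Set.Icc 0 1) ∧ γ 0 = a ∧ γ 1 = b ∧
      (∀ u ∈ Set.Icc (0 : ℝ) 1, γ u ∈ N) ∧ L = eVariationOn γ (Set.Icc 0 1)})
    (x y : X) :
    dpl (g x) (g y) ≤
      ENNReal.ofReal (12 * Real.sqrt (2 * n + 1) * (n + 1) * dist x y / R) := by
  subst hdpl
  have hface : ∀ T : Finset ↥𝒰, (⋂ U ∈ T, (U : Set X)).Nonempty → lpSimplex T ⊆ N :=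
    fun T hT z hz => hN ▸ ⟨T, hT, hz⟩
  have hloc : ∀ a b, dist a b ≤ R → pathEDistIn N (g a) (g b) ≤
      ENNReal.ofReal (12 * √(2 * n + 1) * (n + 1) / R * dist a b) := by
    intro a b hab
    obtain ⟨σ, τ, hσ, -, ⟨V, hVσ, hVτ⟩, hσN, hτN, ha0, hb0, ha, hb, ha1, hb1⟩ := hshare a b hab
    refine (pathEDistIn_le_of_mem_lpSimplex hVσ hVτ ⟨ha0, ha, ha1⟩ ⟨hb0, hb, hb1⟩
      (hface σ hσN) (hface τ hτN)).trans (ENNReal.ofReal_le_ofReal ?_)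
    calc (1 + 2 * √(σ.card : ℝ)) * ‖g a - g b‖
        ≤ 3 * √(2 * n + 1) * (4 * (n + 1) * dist a b / R) :=
          mul_le_mul (one_add_two_mul_sqrt_le hσ) (hlip a b hab) (norm_nonneg _) (by positivity)
      _ = 12 * √(2 * n + 1) * (n + 1) / R * dist a b := by ring
  rw [mul_div_right_comm]
  exact le_ofReal_mul_dist_of_local hpath (fun a b c => pathEDistIn_triangle N (g a) (g b) (g c))
    (by positivity) hR hloc x y

/-- Lemma on maps to the nerve: if `X` is a path metric space, `𝒰` an open cover of
dimension at most `n` with Lebesgue number `R > 0`, and `g : X → ℓ²(𝒰)` maps into the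
nerve `N`, satisfies `‖g(x) − g(y)‖₂ ≤ 4(n+1)d(x,y)/R` whenever `d(x,y) ≤ R`, and sends
points at distance at most `R` into simplices sharing a common vertex, then for the
Euclidean path length metric `d_pl` on the nerve,
`d_pl(g(x),g(y)) ≤ 12√(2n+1)(n+1)·d(x,y)/R` for all `x, y`. -/
theorem nerve_map_path_length_estimate
    {X : Type*} [MetricSpace X] (n : ℕ) (R : ℝ) (hR : 0 < R)
    (𝒰 : Set (Set X))
    (hopen : ∀ U ∈ 𝒰, IsOpen U)
    (hcover : ⋃₀ 𝒰 = Set.univ)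
    (hmult : ∀ x : X, {U | U ∈ 𝒰 ∧ x ∈ U}.encard ≤ (n : ℕ∞) + 1)
    (hleb : ∀ x : X, ∃ U ∈ 𝒰, Metric.closedBall x R ⊆ U)
    -- `X` is a path metric space:
    (hpath : ∀ x y : X, ∀ ε > (0 : ℝ), ∃ γ : ℝ → X,
      ContinuousOn γ (Set.Icc 0 1) ∧ γ 0 = x ∧ γ 1 = y ∧
      eVariationOn γ (Set.Icc 0 1) ≤ ENNReal.ofReal (dist x y + ε))
    (g : X → lp (fun _ : ↥𝒰 => ℝ) 2)
    -- Lipschitz-type estimate at scale `≤ R`: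
    (hlip : ∀ x y : X, dist x y ≤ R → ‖g x - g y‖ ≤ 4 * (n + 1) * dist x y / R)
    -- nearby points land in simplices of the nerve sharing a common vertex:
    (hshare : ∀ x y : X, dist x y ≤ R → ∃ σ τ : Finset ↥𝒰,
      σ.card ≤ n + 1 ∧ τ.card ≤ n + 1 ∧ (∃ V : ↥𝒰, V ∈ σ ∧ V ∈ τ) ∧
      (⋂ U ∈ σ, (U : Set X)).Nonempty ∧ (⋂ U ∈ τ, (U : Set X)).Nonempty ∧
      (∀ U : ↥𝒰, U ∉ σ → g x U = 0) ∧ (∀ U : ↥𝒰, U ∉ τ → g y U = 0) ∧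
      (∀ U : ↥𝒰, 0 ≤ g x U) ∧ (∀ U : ↥𝒰, 0 ≤ g y U) ∧
      (∑ U ∈ σ, g x U) = 1 ∧ (∑ U ∈ τ, g y U) = 1)
    -- the geometric realization of the nerve inside `ℓ²(𝒰)`:
    (N : Set (lp (fun _ : ↥𝒰 => ℝ) 2))
    (hN : N = {z | ∃ T : Finset ↥𝒰, (⋂ U ∈ T, (U : Set X)).Nonempty ∧
      (∀ U : ↥𝒰, U ∉ T → z U = 0) ∧ (∀ U : ↥𝒰, 0 ≤ z U) ∧ (∑ U ∈ T, z U) = 1})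
    (hgN : ∀ x : X, g x ∈ N)
    -- the Euclidean path length metric on the nerve:
    (dpl : lp (fun _ : ↥𝒰 => ℝ) 2 → lp (fun _ : ↥𝒰 => ℝ) 2 → ℝ≥0∞)
    (hdpl : dpl = fun a b => sInf {L : ℝ≥0∞ | ∃ γ : ℝ → lp (fun _ : ↥𝒰 => ℝ) 2,
      ContinuousOn γ (Set.Icc 0 1) ∧ γ 0 = a ∧ γ 1 = b ∧
      (∀ u ∈ Set.Icc (0 : ℝ) 1, γ u ∈ N) ∧ L = eVariationOn γ (Set.Icc 0 1)})
    (x y : X) :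
    dpl (g x) (g y) ≤
      ENNReal.ofReal (12 * Real.sqrt (2 * n + 1) * (n + 1) * dist x y / R) :=
  nerve_map_path_length_estimate_general n R hR 𝒰 hpath g hlip hshare N hN dpl hdpl x y
end
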